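/- arXiv:2304.00479 — 8 statements merged into one kernel-verified Lean document; each statement's English description precedes it below -/
import Mathlib

section
/- A set function f : 2^N → ℝ is submodular and monotone non-decreasing if and only if for all X, Y ⊆ N it holds that f(Y) ≤ f(X) + Σ_{i ∈ Y \ X} ρ_i(X). -/
/-!
If `f` is submodular, adding the elements of `S` to `X` one at a time gains at most their
marginals at `X`; with monotonicity, `f Y ≤ f (X ∪ Y)` then gives the bound. Conversely, the
bound for `Y ⊆ X` is monotonicity, and for `Y = X ∪ {i, j}` it says `ρ_i(X ∪ {j}) ≤ ρ_i(X)`.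
Adding one element at a time, this local inequality yields diminishing marginal returns,
which in turn give submodularity.
-/

def Submodular {n : ℕ} (f : Finset (Fin n) → ℝ) : Prop :=
  ∀ X Y : Finset (Fin n), f (X ∩ Y) + f (X ∪ Y) ≤ f X + f Y

namespace SetFunction

open Finset

variable {α : Type*} [DecidableEq α]

/-- The marginal return `ρ_i(X)`. -/
def marginal (f : Finset α → ℝ) (X : Finset α) (i : α) : ℝ :=
  f (insert i X) - f X

def HasDiminishingReturns (f : Finset α → ℝ) : Prop :=
  ∀ S T i, S ⊆ T → i ∉ T → marginal f T i ≤ marginal f S i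

variable {f : Finset α → ℝ}

theorem le_add_sum_marginal (hf : ∀ X Y, f (X ∩ Y) + f (X ∪ Y) ≤ f X + f Y)
    (X S : Finset α) : f (X ∪ S) ≤ f X + ∑ i ∈ S, marginal f X i := by
  induction S using Finset.induction_on with
  | empty => simp
  | @insert a S haS ih =>
    have hinter : insert a X ∩ (X ∪ S) = X := by
      ext x; simp only [mem_inter, mem_insert, mem_union]; grind
    have hunion : insert a X ∪ (X ∪ S) = X ∪ insert a S := by
      ext x; simp only [mem_union, mem_insert]; tauto
    have hsub := hf (insert a X) (X ∪ S)
    rw [hinter, hunion] at hsub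
    rw [sum_insert haS]
    unfold marginal at *
    linarith

theorem monotone_of_le_add_sum_marginal
    (hf : ∀ X Y : Finset α, f Y ≤ f X + ∑ i ∈ Y \ X, marginal f X i) : Monotone f := by
  intro X Y hXY
  simpa [sdiff_eq_empty_iff_subset.mpr hXY] using hf Y X

theorem marginal_insert_le_of_le_add_sum_marginal
    (hf : ∀ X Y : Finset α, f Y ≤ f X + ∑ i ∈ Y \ X, marginal f X i)
    {X : Finset α} {i j : α} (hi : i ∉ insert j X) :
    marginal f (insert j X) i ≤ marginal f X i := by
  by_cases hj : j ∈ X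
  · rw [insert_eq_of_mem hj]
  have hij : i ≠ j := fun h => hi (h ▸ mem_insert_self i X)
  have hdiff : insert i (insert j X) \ X = {i, j} := by
    ext x; simp only [mem_sdiff, mem_insert, mem_singleton]; grind
  have hbound := hf X (insert i (insert j X))
  rw [hdiff, sum_pair hij] at hbound
  unfold marginal at *
  linarith

theorem hasDiminishingReturns_of_marginal_insert_le
    (hf : ∀ X i j, i ∉ insert j X → marginal f (insert j X) i ≤ marginal f X i) :
    HasDiminishingReturns f := by
  suffices h : ∀ S D : Finset α, ∀ i, i ∉ S ∪ D → marginal f (S ∪ D) i ≤ marginal f S i by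
    intro S T i hST hiT
    simpa [union_sdiff_of_subset hST] using h S (T \ S) i (by rwa [union_sdiff_of_subset hST])
  intro S D i
  induction D using Finset.induction_on with
  | empty => simp
  | @insert a D _ ih =>
    rw [union_insert]
    intro hi
    exact (hf _ i a hi).trans (ih fun h => hi (mem_insert_of_mem h))

theorem sub_le_sub_of_hasDiminishingReturns (hf : HasDiminishingReturns f)
    {S T D : Finset α} (hST : S ⊆ T) (hDT : Disjoint D T) :
    f (T ∪ D) - f T ≤ f (S ∪ D) - f S := by
  induction D using Finset.induction_on with
  | empty => simp
  | @insert a D haD ih =>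
    rw [disjoint_insert_left] at hDT
    have haTD : a ∉ T ∪ D := by simp [hDT.1, haD]
    have hstep := hf (S ∪ D) (T ∪ D) a (union_subset_union_left hST) haTD
    rw [union_insert, union_insert]
    unfold marginal at hstep
    linarith [ih hDT.2]

theorem submodular_of_hasDiminishingReturns (hf : HasDiminishingReturns f) (X Y : Finset α) :
    f (X ∩ Y) + f (X ∪ Y) ≤ f X + f Y := by
  have h := sub_le_sub_of_hasDiminishingReturns hf (inter_subset_right (s₁ := Y) (s₂ := X))
    (sdiff_disjoint (s := X) (t := Y))
  rw [union_sdiff_self_eq_union, union_comm (Y ∩ X), sdiff_union_inter, inter_comm] at h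
  linarith

end SetFunction

open SetFunction

theorem submodular_and_monotone_iff_general {n : ℕ}
    (f : Finset (Fin n) → ℝ) :
    (Submodular f ∧ ∀ X Y : Finset (Fin n), X ⊆ Y → f X ≤ f Y) ↔
      ∀ X Y : Finset (Fin n),
        f Y ≤ f X + ∑ i ∈ Y \ X, (f (insert i X) - f X) := by
  constructor
  · rintro ⟨hsub, hmono⟩ X Y
    calc f Y ≤ f (X ∪ (Y \ X)) := hmono _ _ (by simp)
      _ ≤ _ := le_add_sum_marginal hsub X (Y \ X)
  · intro hf
    have hdr : HasDiminishingReturns f := hasDiminishingReturns_of_marginal_insert_le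
      fun _ _ _ => marginal_insert_le_of_le_add_sum_marginal hf
    exact ⟨submodular_of_hasDiminishingReturns hdr,
      fun _ _ h => monotone_of_le_add_sum_marginal hf h⟩

/-- `f` is submodular and monotone non-decreasing iff
`f(Y) ≤ f(X) + Σ_{i ∈ Y \ X} ρ_i(X)` for all `X, Y ⊆ N`,
where `ρ_i(X) = f(X ∪ {i}) − f(X)`. -/
theorem submodular_and_monotone_iff {n : ℕ} (hn : 0 < n)
    (f : Finset (Fin n) → ℝ) :
    (Submodular f ∧ ∀ X Y : Finset (Fin n), X ⊆ Y → f X ≤ f Y) ↔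
      ∀ X Y : Finset (Fin n),
        f Y ≤ f X + ∑ i ∈ Y \ X, (f (insert i X) - f X) :=
  submodular_and_monotone_iff_general f
end

section
/- Let f : 2^N → ℝ be a set function with f(∅) = 0, identified with a function on binary vectors f : {0,1}^n → ℝ. The Lovász extension f^L coincides with the convex closure f^c on [0,1]^n (i.e., f^L(x) = f^c(x) for every x ∈ [0,1]^n and every permutation δ sorting the entries of x in non-increasing order) if and only if f is submodular. -/
/-- `X^{δ,i} = {δ(1),…,δ(i)}`: the set of the first `i+1` elements (positions `0,…,i`
in 0-based indexing) under the permutation `δ`. -/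
def prefixLe {n : ℕ} (δ : Equiv.Perm (Fin n)) (i : Fin n) : Finset (Fin n) :=
  (Finset.univ.filter (fun l : Fin n => l ≤ i)).image δ

/-- The Lovász extension of `f` evaluated at `x`, using a permutation `δ` sorting the
entries of `x` in non-increasing order:
`f^L(x) = Σ_{i=1}^n (x_{δ(i)} − x_{δ(i+1)}) f(X^{δ,i})`, with `x_{δ(n+1)} := 0`. -/
def lovasz {n : ℕ} (f : Finset (Fin n) → ℝ) (δ : Equiv.Perm (Fin n))
    (x : Fin n → ℝ) : ℝ :=
  ∑ i : Fin n,
    (x (δ i) - (if h : (i : ℕ) + 1 < n then x (δ ⟨(i : ℕ) + 1, h⟩) else 0)) *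
      f (prefixLe δ i)

/-- The convex closure of `f` evaluated at `x`:
`f^c(x) = min{ Σ_S α_S f(S) : Σ_S α_S 1_S = x, Σ_S α_S = 1, α ≥ 0 }`. -/
noncomputable def convexClosure {n : ℕ} (f : Finset (Fin n) → ℝ)
    (x : Fin n → ℝ) : ℝ :=
  sInf { r : ℝ | ∃ α : Finset (Fin n) → ℝ,
    (∀ S, 0 ≤ α S) ∧
    (∑ S : Finset (Fin n), α S) = 1 ∧
    (∀ i : Fin n, (∑ S : Finset (Fin n), α S * (if i ∈ S then 1 else 0)) = x i) ∧
    r = ∑ S : Finset (Fin n), α S * f S }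

/-! For a permutation `δ` sorting `x`, the Lovász extension is the linear functional
`x ↦ ⟨x, y⟩` of the greedy vector `y_{δ(i)} = f(X^{δ,i}) - f(X^{δ,i-1})`, and it equals
`Σ_S β_S f(S)` for the decomposition `β` of `x` along the chain of prefix sets of `δ`.
If `f` is submodular then `y(S) ≤ f(S)` for every `S`, with equality on prefix sets, so
`⟨x, y⟩ = Σ_S α_S y(S) ≤ Σ_S α_S f(S)` for every convex decomposition `α` of `x`: the chain
decomposition attains the convex closure. Conversely, `x = (1_X + 1_Y)/2` is the midpoint both
of `1_X, 1_Y` and of `1_{X ∩ Y}, 1_{X ∪ Y}`, and `X ∩ Y ⊆ X ∪ Y` are superlevel sets of `x`,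
hence prefix sets of every `δ` sorting `x`; so `f^L(x) = (f(X ∩ Y) + f(X ∪ Y))/2` while
`f^c(x) ≤ (f(X) + f(Y))/2`. -/

open Finset

lemma sum_range_sub_mul_ite_lt {R : Type*} [Ring R] (e : ℕ → R) {m N : ℕ} (h : m < N) :
    ∑ k ∈ range N, (e k - e (k + 1)) * (if m < k then 1 else 0) = e (m + 1) - e N := by
  have hterm : ∀ k, (e k - e (k + 1)) * (if m < k then 1 else 0)
      = e (max k (m + 1)) - e (max (k + 1) (m + 1)) := by
    intro k
    split_ifs with hk
    · rw [max_eq_left hk, max_eq_left (by omega), mul_one]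
    · rw [max_eq_right (by omega), max_eq_right (by omega), mul_zero, sub_self]
  rw [sum_congr rfl fun k _ => hterm k, sum_range_sub', max_eq_right (Nat.zero_le _),
    max_eq_left h]

section SetCombination

variable {ι β : Type*} [DecidableEq β]

def setCombination (s : Finset ι) (w : ι → ℝ) (T : ι → β) (b : β) : ℝ :=
  ∑ k ∈ s, if T k = b then w k else 0

lemma sum_setCombination_mul [Fintype β] (s : Finset ι) (w : ι → ℝ) (T : ι → β) (g : β → ℝ) :
    ∑ b, setCombination s w T b * g b = ∑ k ∈ s, w k * g (T k) := by
  simp_rw [setCombination, sum_mul, ite_mul, zero_mul]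
  rw [sum_comm]
  simp

lemma exists_eq_of_setCombination_ne_zero {s : Finset ι} {w : ι → ℝ} {T : ι → β} {b : β}
    (h : setCombination s w T b ≠ 0) : ∃ k ∈ s, T k = b := by
  obtain ⟨k, hk, hne⟩ := exists_ne_zero_of_sum_ne_zero h
  exact ⟨k, hk, by_contra fun hb => hne (if_neg hb)⟩

end SetCombination

section Lovasz

variable {n : ℕ}

def prefixSet (δ : Equiv.Perm (Fin n)) (k : ℕ) : Finset (Fin n) :=
  univ.filter fun j => (δ.symm j : ℕ) < k

@[simp]
lemma mem_prefixSet {δ : Equiv.Perm (Fin n)} {k : ℕ} {j : Fin n} :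
    j ∈ prefixSet δ k ↔ (δ.symm j : ℕ) < k := by
  simp [prefixSet]

@[simp]
lemma prefixSet_zero (δ : Equiv.Perm (Fin n)) : prefixSet δ 0 = ∅ := by
  ext; simp

lemma prefixSet_of_le (δ : Equiv.Perm (Fin n)) {k : ℕ} (h : n ≤ k) : prefixSet δ k = univ := by
  ext j; simpa using (δ.symm j).isLt.trans_le h

lemma prefixSet_mono (δ : Equiv.Perm (Fin n)) : Monotone (prefixSet δ) := by
  intro k k' h j
  simp only [mem_prefixSet]
  omega

lemma prefixSet_succ (δ : Equiv.Perm (Fin n)) (i : Fin n) :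
    prefixSet δ ((i : ℕ) + 1) = insert (δ i) (prefixSet δ (i : ℕ)) := by
  ext j
  rw [mem_insert, mem_prefixSet, mem_prefixSet, ← Equiv.symm_apply_eq, Fin.ext_iff]
  omega

lemma prefixSet_succ_inter_of_notMem {δ : Equiv.Perm (Fin n)} {i : Fin n} {S : Finset (Fin n)}
    (h : δ i ∉ S) : prefixSet δ ((i : ℕ) + 1) ∩ S = prefixSet δ (i : ℕ) ∩ S := by
  rw [prefixSet_succ, insert_inter_of_notMem h]

lemma prefixLe_eq_prefixSet (δ : Equiv.Perm (Fin n)) (i : Fin n) :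
    prefixLe δ i = prefixSet δ ((i : ℕ) + 1) := by
  ext j
  simp only [prefixLe, mem_image, mem_filter, mem_univ, true_and, mem_prefixSet]
  constructor
  · rintro ⟨l, hl, rfl⟩
    rw [Equiv.symm_apply_apply]
    exact Nat.lt_succ_iff.2 hl
  · exact fun h => ⟨δ.symm j, Fin.le_iff_val_le_val.2 (Nat.lt_succ_iff.1 h), δ.apply_symm_apply j⟩

lemma sum_sub_prefixSet_inter (δ : Equiv.Perm (Fin n)) (g : Finset (Fin n) → ℝ)
    (S : Finset (Fin n)) :
    ∑ i : Fin n, (g (prefixSet δ ((i : ℕ) + 1) ∩ S) - g (prefixSet δ (i : ℕ) ∩ S)) = g S - g ∅ := by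
  rw [Fin.sum_univ_eq_sum_range (fun k => g (prefixSet δ (k + 1) ∩ S) - g (prefixSet δ k ∩ S)),
    sum_range_sub (fun k => g (prefixSet δ k ∩ S)), prefixSet_of_le δ le_rfl, prefixSet_zero,
    univ_inter, empty_inter]

def greedyVector (f : Finset (Fin n) → ℝ) (δ : Equiv.Perm (Fin n)) (j : Fin n) : ℝ :=
  f (prefixSet δ ((δ.symm j : ℕ) + 1)) - f (prefixSet δ (δ.symm j : ℕ))

lemma sum_greedyVector_eq_sum_ite (f : Finset (Fin n) → ℝ) (δ : Equiv.Perm (Fin n)) (S : Finset (Fin n)) :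
    ∑ j ∈ S, greedyVector f δ j = ∑ i : Fin n,
      if δ i ∈ S then f (prefixSet δ ((i : ℕ) + 1)) - f (prefixSet δ (i : ℕ)) else 0 := by
  rw [← univ_inter S, ← sum_ite_mem, ← Equiv.sum_comp δ]
  simp [greedyVector]

theorem sum_greedyVector_le {f : Finset (Fin n) → ℝ} (hf : Submodular f) (δ : Equiv.Perm (Fin n))
    (S : Finset (Fin n)) : ∑ j ∈ S, greedyVector f δ j ≤ f S - f ∅ := by
  rw [sum_greedyVector_eq_sum_ite, ← sum_sub_prefixSet_inter δ f S]
  refine sum_le_sum fun i _ => ?_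
  split_ifs with h
  · have hsub : prefixSet δ (i : ℕ) ⊆ prefixSet δ ((i : ℕ) + 1) := prefixSet_mono δ (Nat.le_succ _)
    have hinter : prefixSet δ i ∩ (prefixSet δ ((i : ℕ) + 1) ∩ S) = prefixSet δ i ∩ S := by
      rw [← inter_assoc, inter_eq_left.2 hsub]
    have hunion : prefixSet δ i ∪ (prefixSet δ ((i : ℕ) + 1) ∩ S) = prefixSet δ ((i : ℕ) + 1) := by
      rw [prefixSet_succ, insert_inter_of_mem h, union_insert, union_eq_left.2 inter_subset_left]
    have key := hf (prefixSet δ i) (prefixSet δ ((i : ℕ) + 1) ∩ S)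
    rw [hinter, hunion] at key
    linarith
  · rw [prefixSet_succ_inter_of_notMem h, sub_self]

theorem sum_greedyVector_prefixSet (f : Finset (Fin n) → ℝ) (δ : Equiv.Perm (Fin n)) (m : ℕ) :
    ∑ j ∈ prefixSet δ m, greedyVector f δ j = f (prefixSet δ m) - f ∅ := by
  rw [sum_greedyVector_eq_sum_ite, ← sum_sub_prefixSet_inter δ f]
  refine sum_congr rfl fun i _ => ?_
  split_ifs with h
  · rw [mem_prefixSet, Equiv.symm_apply_apply] at h
    rw [inter_eq_left.2 (prefixSet_mono δ h), inter_eq_left.2 (prefixSet_mono δ h.le)]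
  · rw [prefixSet_succ_inter_of_notMem h, sub_self]

/-- Shifted by one: `sortedLevel δ x (k + 1) = x (δ k)`, padded with `1` at `0` and with `0`
beyond `n`. The chain decomposition of `x` puts weight
`sortedLevel δ x k - sortedLevel δ x (k + 1)` on `prefixSet δ k`. -/
def sortedLevel (δ : Equiv.Perm (Fin n)) (x : Fin n → ℝ) : ℕ → ℝ
  | 0 => 1
  | k + 1 => if h : k < n then x (δ ⟨k, h⟩) else 0

lemma sortedLevel_succ_val (δ : Equiv.Perm (Fin n)) (x : Fin n → ℝ) (i : Fin n) :
    sortedLevel δ x ((i : ℕ) + 1) = x (δ i) := by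
  simp [sortedLevel]

lemma sortedLevel_of_lt (δ : Equiv.Perm (Fin n)) (x : Fin n → ℝ) {k : ℕ} (h : n < k) :
    sortedLevel δ x k = 0 := by
  obtain ⟨k, rfl⟩ := Nat.exists_eq_add_of_lt h
  simp [sortedLevel, show ¬ n + k < n by omega]

lemma sortedLevel_antitone {δ : Equiv.Perm (Fin n)} {x : Fin n → ℝ}
    (hx : ∀ i, 0 ≤ x i ∧ x i ≤ 1) (hδ : Antitone (x ∘ δ)) : Antitone (sortedLevel δ x) := by
  refine antitone_nat_of_succ_le fun k => ?_
  rcases k with _ | k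
  · simp only [sortedLevel]
    split_ifs <;> simp [hx]
  · simp only [sortedLevel]
    split_ifs with h₁ h₂ h₂
    · exact hδ (Fin.mk_le_mk.2 k.le_succ)
    · omega
    · exact (hx _).1
    · rfl

theorem lovasz_eq_sum_mul_greedyVector {f : Finset (Fin n) → ℝ} (h0 : f ∅ = 0)
    (δ : Equiv.Perm (Fin n)) (x : Fin n → ℝ) :
    lovasz f δ x = ∑ j, x j * greedyVector f δ j := by
  set e := sortedLevel δ x
  set F := fun k => f (prefixSet δ k)
  have hlov : lovasz f δ x = ∑ k ∈ range n, (e (k + 1) - e (k + 2)) * F (k + 1) := by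
    rw [lovasz, ← Fin.sum_univ_eq_sum_range (fun k => (e (k + 1) - e (k + 2)) * F (k + 1))]
    refine sum_congr rfl fun i _ => ?_
    rw [prefixLe_eq_prefixSet, ← sortedLevel_succ_val δ x i]
    rfl
  have hgreedy : ∑ j, x j * greedyVector f δ j = ∑ k ∈ range n, e (k + 1) * (F (k + 1) - F k) := by
    rw [← Equiv.sum_comp δ, ← Fin.sum_univ_eq_sum_range (fun k => e (k + 1) * (F (k + 1) - F k))]
    refine sum_congr rfl fun i _ => ?_
    simp [greedyVector, e, F, sortedLevel_succ_val]
  -- Abel summation; the boundary terms vanish since `f ∅ = 0` and `e (n + 1) = 0`.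
  rw [hlov, hgreedy, ← sub_eq_zero, ← sum_sub_distrib]
  convert sum_range_sub' (fun k => e (k + 1) * F k) n using 1
  · exact sum_congr rfl fun k _ => by ring
  · simp [F, h0, e, sortedLevel_of_lt δ x (Nat.lt_succ_self n)]

def IsConvexDecomposition (x : Fin n → ℝ) (α : Finset (Fin n) → ℝ) : Prop :=
  (∀ S, 0 ≤ α S) ∧ ∑ S, α S = 1 ∧ ∀ i, ∑ S, α S * (if i ∈ S then 1 else 0) = x i

lemma IsConvexDecomposition.sum_mul_eq {x : Fin n → ℝ} {α : Finset (Fin n) → ℝ}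
    (hα : IsConvexDecomposition x α) (v : Fin n → ℝ) :
    ∑ j, x j * v j = ∑ S, α S * ∑ j ∈ S, v j := by
  simp_rw [← hα.2.2, sum_mul, mul_sum]
  rw [sum_comm]
  simp only [mul_ite, mul_one, mul_zero, ite_mul, zero_mul, sum_ite_mem, univ_inter]

lemma isConvexDecomposition_setCombination {ι : Type*} {x : Fin n → ℝ} {s : Finset ι}
    {w : ι → ℝ} {T : ι → Finset (Fin n)} (hw : ∀ k ∈ s, 0 ≤ w k) (hsum : ∑ k ∈ s, w k = 1)
    (hx : ∀ i, ∑ k ∈ s, w k * (if i ∈ T k then 1 else 0) = x i) :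
    IsConvexDecomposition x (setCombination s w T) := by
  refine ⟨fun S => sum_nonneg fun k hk => ?_, ?_, fun i => ?_⟩
  · split_ifs
    exacts [hw k hk, le_rfl]
  · simpa [hsum] using sum_setCombination_mul s w T 1
  · rw [sum_setCombination_mul]
    exact hx i

lemma isConvexDecomposition_midpoint (A B : Finset (Fin n)) :
    IsConvexDecomposition (fun i => ((if i ∈ A then 1 else 0) + (if i ∈ B then 1 else 0)) / 2)
      (setCombination univ (fun _ => 1 / 2) ![A, B]) :=
  isConvexDecomposition_setCombination (fun _ _ => by norm_num) (by norm_num) fun i => by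
    by_cases i ∈ A <;> by_cases i ∈ B <;> norm_num [*, Fin.sum_univ_two]

lemma convexClosure_le (f : Finset (Fin n) → ℝ) {x : Fin n → ℝ} {α : Finset (Fin n) → ℝ}
    (hα : IsConvexDecomposition x α) : convexClosure f x ≤ ∑ S, α S * f S := by
  refine csInf_le ⟨-∑ S, |f S|, ?_⟩ ⟨α, hα.1, hα.2.1, hα.2.2, rfl⟩
  rintro _ ⟨β, hpos, hsum, -, rfl⟩
  calc -∑ S, |f S| = ∑ S, β S * -∑ T, |f T| := by rw [← sum_mul, hsum, one_mul]
    _ ≤ ∑ S, β S * f S := sum_le_sum fun S _ => mul_le_mul_of_nonneg_left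
        (neg_le.1 ((neg_le_abs (f S)).trans (single_le_sum (fun T _ => abs_nonneg (f T))
          (mem_univ S)))) (hpos S)

lemma le_convexClosure {f : Finset (Fin n) → ℝ} {x : Fin n → ℝ} {r : ℝ}
    (hx : ∃ α, IsConvexDecomposition x α)
    (h : ∀ α, IsConvexDecomposition x α → r ≤ ∑ S, α S * f S) : r ≤ convexClosure f x := by
  obtain ⟨α, hα⟩ := hx
  refine le_csInf ⟨_, α, hα.1, hα.2.1, hα.2.2, rfl⟩ ?_
  rintro _ ⟨β, hpos, hsum, hcoord, rfl⟩
  exact h β ⟨hpos, hsum, hcoord⟩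

variable {f : Finset (Fin n) → ℝ} {δ : Equiv.Perm (Fin n)} {x : Fin n → ℝ}

theorem lovasz_eq_of_isConvexDecomposition (h0 : f ∅ = 0) {β : Finset (Fin n) → ℝ}
    (hβ : IsConvexDecomposition x β) (hchain : ∀ S, β S ≠ 0 → ∃ m, prefixSet δ m = S) :
    lovasz f δ x = ∑ S, β S * f S := by
  rw [lovasz_eq_sum_mul_greedyVector h0, hβ.sum_mul_eq]
  refine sum_congr rfl fun S _ => ?_
  obtain hS | hS := eq_or_ne (β S) 0
  · simp [hS]
  · obtain ⟨m, rfl⟩ := hchain S hS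
    rw [sum_greedyVector_prefixSet, h0, sub_zero]

theorem lovasz_le_of_isConvexDecomposition (hf : Submodular f) (h0 : f ∅ = 0)
    {α : Finset (Fin n) → ℝ} (hα : IsConvexDecomposition x α) :
    lovasz f δ x ≤ ∑ S, α S * f S := by
  rw [lovasz_eq_sum_mul_greedyVector h0, hα.sum_mul_eq]
  refine sum_le_sum fun S _ => mul_le_mul_of_nonneg_left ?_ (hα.1 S)
  simpa [h0] using sum_greedyVector_le hf δ S

theorem exists_isConvexDecomposition_prefixSet (hx : ∀ i, 0 ≤ x i ∧ x i ≤ 1)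
    (hδ : Antitone (x ∘ δ)) :
    ∃ β, IsConvexDecomposition x β ∧ ∀ S, β S ≠ 0 → ∃ m, prefixSet δ m = S := by
  refine ⟨setCombination (range (n + 1)) (fun k => sortedLevel δ x k - sortedLevel δ x (k + 1))
    (prefixSet δ),
    isConvexDecomposition_setCombination (fun k _ => ?_) ?_ fun i => ?_, fun S hS => ?_⟩
  · exact sub_nonneg.2 (sortedLevel_antitone hx hδ k.le_succ)
  · rw [sum_range_sub', sortedLevel_of_lt δ x n.lt_add_one, sub_zero]
    rfl
  · simp_rw [mem_prefixSet]
    rw [sum_range_sub_mul_ite_lt (sortedLevel δ x) (Nat.lt_succ_of_lt (δ.symm i).isLt),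
      sortedLevel_of_lt δ x n.lt_add_one, sub_zero, sortedLevel_succ_val, Equiv.apply_symm_apply]
  · obtain ⟨m, -, hm⟩ := exists_eq_of_setCombination_ne_zero hS
    exact ⟨m, hm⟩

theorem lovasz_eq_convexClosure (hf : Submodular f) (h0 : f ∅ = 0)
    (hx : ∀ i, 0 ≤ x i ∧ x i ≤ 1) (hδ : Antitone (x ∘ δ)) : lovasz f δ x = convexClosure f x := by
  obtain ⟨β, hβ, hchain⟩ := exists_isConvexDecomposition_prefixSet hx hδ
  refine le_antisymm (le_convexClosure ⟨β, hβ⟩ fun α hα =>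
    lovasz_le_of_isConvexDecomposition hf h0 hα) ?_
  rw [lovasz_eq_of_isConvexDecomposition h0 hβ hchain]
  exact convexClosure_le f hβ

lemma exists_perm_antitone {α : Type*} [LinearOrder α] (x : Fin n → α) :
    ∃ δ : Equiv.Perm (Fin n), Antitone (x ∘ δ) :=
  ⟨Tuple.sort (OrderDual.toDual ∘ x), monotone_toDual_comp_iff.1 (Tuple.monotone_sort _)⟩

theorem exists_prefixSet_eq_filter_le (hδ : Antitone (x ∘ δ)) (t : ℝ) :
    ∃ m, prefixSet δ m = univ.filter fun j => t ≤ x j := by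
  refine ⟨(univ.filter fun j => t ≤ x j).sup fun j => (δ.symm j : ℕ) + 1, ?_⟩
  ext j
  simp only [mem_prefixSet, Finset.lt_sup_iff, mem_filter, mem_univ, true_and]
  constructor
  · rintro ⟨j', hj', hlt⟩
    have := hδ (Fin.le_iff_val_le_val.2 (Nat.lt_succ_iff.1 hlt))
    simp only [Function.comp_apply, Equiv.apply_symm_apply] at this
    exact hj'.trans this
  · exact fun hj => ⟨j, hj, Nat.lt_succ_self _⟩

theorem submodular_of_lovasz_eq_convexClosure (h0 : f ∅ = 0)
    (H : ∀ x : Fin n → ℝ, (∀ i, 0 ≤ x i ∧ x i ≤ 1) →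
      ∀ δ : Equiv.Perm (Fin n), Antitone (x ∘ δ) → lovasz f δ x = convexClosure f x) :
    Submodular f := by
  intro X Y
  set x : Fin n → ℝ := fun i => ((if i ∈ X then 1 else 0) + (if i ∈ Y then 1 else 0)) / 2
  have hx : ∀ i, 0 ≤ x i ∧ x i ≤ 1 := fun i => by simp only [x]; split_ifs <;> norm_num
  obtain ⟨δ, hδ⟩ := exists_perm_antitone x
  have hmid : (fun i => ((if i ∈ X ∩ Y then 1 else 0) + (if i ∈ X ∪ Y then 1 else 0)) / 2) = x := by
    funext i
    by_cases i ∈ X <;> by_cases i ∈ Y <;> simp [*, x]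
  have hlevel : ∀ i, (1 ≤ x i ↔ i ∈ X ∩ Y) ∧ (1 / 2 ≤ x i ↔ i ∈ X ∪ Y) := by
    intro i
    by_cases i ∈ X <;> by_cases i ∈ Y <;> norm_num [*, x]
  obtain ⟨p, hp⟩ := exists_prefixSet_eq_filter_le hδ 1
  obtain ⟨q, hq⟩ := exists_prefixSet_eq_filter_le hδ (1 / 2)
  have hchain : ∀ S, setCombination univ (fun _ => 1 / 2) ![X ∩ Y, X ∪ Y] S ≠ 0 →
      ∃ m, prefixSet δ m = S := by
    intro S hS
    obtain ⟨k, -, rfl⟩ := exists_eq_of_setCombination_ne_zero hS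
    fin_cases k
    · exact ⟨p, by ext i; simpa [hp] using (hlevel i).1⟩
    · exact ⟨q, by ext i; simpa [hq] using (hlevel i).2⟩
  have hlov := lovasz_eq_of_isConvexDecomposition h0
    (hmid ▸ isConvexDecomposition_midpoint (X ∩ Y) (X ∪ Y)) hchain
  have hcc := convexClosure_le f (isConvexDecomposition_midpoint X Y)
  simp only [sum_setCombination_mul, Fin.sum_univ_two, Matrix.cons_val_zero,
    Matrix.cons_val_one] at hlov hcc
  linarith [H x hx δ hδ]

end Lovasz

theorem lovasz_eq_convexClosure_iff_submodular_general {n : ℕ}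
    (f : Finset (Fin n) → ℝ) (h0 : f ∅ = 0) :
    (∀ x : Fin n → ℝ, (∀ i, 0 ≤ x i ∧ x i ≤ 1) →
      ∀ δ : Equiv.Perm (Fin n), (∀ i j : Fin n, i ≤ j → x (δ j) ≤ x (δ i)) →
        lovasz f δ x = convexClosure f x) ↔ Submodular f :=
  ⟨submodular_of_lovasz_eq_convexClosure h0,
    fun hf _ hx _ hδ => lovasz_eq_convexClosure hf h0 hx hδ⟩

/-- The Lovász extension of `f` coincides with its convex closure on `[0,1]^n`
(for every sorting permutation) if and only if `f` is submodular. -/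
theorem lovasz_eq_convexClosure_iff_submodular {n : ℕ} (hn : 0 < n)
    (f : Finset (Fin n) → ℝ) (h0 : f ∅ = 0) :
    (∀ x : Fin n → ℝ, (∀ i, 0 ≤ x i ∧ x i ≤ 1) →
      ∀ δ : Equiv.Perm (Fin n), (∀ i j : Fin n, i ≤ j → x (δ j) ≤ x (δ i)) →
        lovasz f δ x = convexClosure f x) ↔ Submodular f :=
  lovasz_eq_convexClosure_iff_submodular_general f h0
end

section
/- Let f : 2^N → ℝ be submodular with f(∅) = 0. For every permutation δ of N, define π^δ ∈ ℝ^n by π^δ_{δ(i)} = f(X^{δ,i}) − f(X^{δ,i−1}) for i = 1,…,n, where X^{δ,i} = {δ(1),…,δ(i)} and X^{δ,0} = ∅. Then every extended polymatroid inequality is valid for the epigraph of f: for every permutation δ and every X ⊆ N, Σ_{i∈X} π^δ_i ≤ f(X). -/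
/-- `X^{δ,i-1} = {δ(1),…,δ(i-1)}` (positions `< i` in 0-based indexing);
for the first position this is `∅`. -/
def prefixLt {n : ℕ} (δ : Equiv.Perm (Fin n)) (i : Fin n) : Finset (Fin n) :=
  (Finset.univ.filter (fun l : Fin n => l < i)).image δ

/-- The coefficient vector `π^δ` of the extended polymatroid inequality associated
with a permutation `δ`: `π^δ_{δ(i)} = f(X^{δ,i}) − f(X^{δ,i−1})`. -/
def epiCoef {n : ℕ} (f : Finset (Fin n) → ℝ) (δ : Equiv.Perm (Fin n)) :
    Fin n → ℝ :=
  fun j => f (prefixLe δ (δ.symm j)) - f (prefixLt δ (δ.symm j))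

open Finset

namespace Submodular

variable {n : ℕ} {f : Finset (Fin n) → ℝ}

theorem marginal_le_of_subset (hf : Submodular f) {A B : Finset (Fin n)} {a : Fin n}
    (hAB : A ⊆ B) (haB : a ∉ B) :
    f (insert a B) - f B ≤ f (insert a A) - f A := by
  have hinter : insert a A ∩ B = A := by
    rw [insert_inter_of_notMem haB, inter_eq_left.mpr hAB]
  have hunion : insert a A ∪ B = insert a B := by
    rw [insert_union, union_eq_right.mpr hAB]
  have := hf (insert a A) B
  rw [hinter, hunion] at this
  linarith

end Submodular

namespace Equiv.Perm

variable {n : ℕ} (δ : Equiv.Perm (Fin n))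

/-- `X^{δ,k}` of the paper: the first `k` elements in the order given by `δ`. -/
def initialSegment (k : ℕ) : Finset (Fin n) :=
  (univ.filter (fun l : Fin n => (l : ℕ) < k)).image δ

@[simp]
theorem initialSegment_zero : δ.initialSegment 0 = ∅ := by
  simp [initialSegment]

theorem initialSegment_eq_univ : δ.initialSegment n = univ := by
  simp [initialSegment, image_univ_equiv]

theorem apply_notMem_initialSegment (k : Fin n) : δ k ∉ δ.initialSegment k := by
  simp [initialSegment]

theorem initialSegment_succ (k : Fin n) :
    δ.initialSegment (k + 1) = insert (δ k) (δ.initialSegment k) := by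
  rw [initialSegment, initialSegment, ← image_insert]
  congr 1
  ext l
  simp only [mem_insert, mem_filter, mem_univ, true_and, Fin.ext_iff]
  omega

theorem prefixLt_eq_initialSegment (k : Fin n) : prefixLt δ k = δ.initialSegment k := rfl

theorem prefixLe_eq_initialSegment (k : Fin n) :
    prefixLe δ k = δ.initialSegment (k + 1) := by
  rw [prefixLe, initialSegment]
  congr 2
  ext l
  rw [Fin.le_def]
  omega

end Equiv.Perm

theorem epiCoef_apply_perm {n : ℕ} (f : Finset (Fin n) → ℝ) (δ : Equiv.Perm (Fin n))
    (k : Fin n) :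
    epiCoef f δ (δ k) = f (δ.initialSegment (k + 1)) - f (δ.initialSegment k) := by
  simp [epiCoef, δ.prefixLe_eq_initialSegment, δ.prefixLt_eq_initialSegment]

theorem sum_epiCoef_inter_initialSegment_le {n : ℕ} {f : Finset (Fin n) → ℝ}
    (hf : Submodular f) (h0 : f ∅ = 0) (δ : Equiv.Perm (Fin n)) (X : Finset (Fin n))
    {k : ℕ} (hk : k ≤ n) :
    ∑ j ∈ X ∩ δ.initialSegment k, epiCoef f δ j ≤ f (X ∩ δ.initialSegment k) := by
  induction k with
  | zero => simp [h0]
  | succ k ih =>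
    set i : Fin n := ⟨k, hk⟩
    have hsucc : δ.initialSegment (k + 1) = insert (δ i) (δ.initialSegment k) :=
      δ.initialSegment_succ i
    have hi : δ i ∉ δ.initialSegment k := δ.apply_notMem_initialSegment i
    by_cases hiX : δ i ∈ X
    · have hmarginal :
          epiCoef f δ (δ i) ≤ f (insert (δ i) (X ∩ δ.initialSegment k)) -
            f (X ∩ δ.initialSegment k) := by
        rw [epiCoef_apply_perm, hsucc]
        exact hf.marginal_le_of_subset inter_subset_right hi
      rw [hsucc, inter_insert_of_mem hiX, sum_insert (fun h => hi (mem_inter.mp h).2)]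
      linarith [ih (by omega)]
    · rw [hsucc, inter_insert_of_notMem hiX]
      exact ih (by omega)

theorem extended_polymatroid_inequality_valid_general {n : ℕ}
    (f : Finset (Fin n) → ℝ) (hf : Submodular f) (h0 : f ∅ = 0)
    (δ : Equiv.Perm (Fin n)) (X : Finset (Fin n)) :
    ∑ i ∈ X, epiCoef f δ i ≤ f X := by
  simpa [δ.initialSegment_eq_univ] using
    sum_epiCoef_inter_initialSegment_le hf h0 δ X le_rfl

/-- Every extended polymatroid inequality is valid for the epigraph of a submodular
function `f` with `f(∅) = 0`: for every permutation `δ` and every `X ⊆ N`,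
`Σ_{i∈X} π^δ_i ≤ f(X)`. -/
theorem extended_polymatroid_inequality_valid {n : ℕ} (hn : 0 < n)
    (f : Finset (Fin n) → ℝ) (hf : Submodular f) (h0 : f ∅ = 0)
    (δ : Equiv.Perm (Fin n)) (X : Finset (Fin n)) :
    ∑ i ∈ X, epiCoef f δ i ≤ f X :=
  extended_polymatroid_inequality_valid_general f hf h0 δ X
end

section
/- Let f : 2^N → ℝ be submodular with f(∅) = 0, define ρ_j(X) = f(X ∪ {j}) − f(X) and f*(S) = f(S) − Σ_{j∈S} ρ_j(N \ {j}) for S ⊆ N. Then every submodular inequality is valid for the hypograph of f: for all S ⊆ N and all X ⊆ N, f(X) ≤ f*(S) + Σ_{j ∈ X \ S} [f*(S ∪ {j}) − f*(S)] + Σ_{j ∈ X} ρ_j(N \ {j}). -/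
/-- The marginal return `ρ_j(X) = f(X ∪ {j}) − f(X)`. -/
def marginal {n : ℕ} (f : Finset (Fin n) → ℝ) (j : Fin n)
    (X : Finset (Fin n)) : ℝ :=
  f (insert j X) - f X

/-- `f*(S) = f(S) − Σ_{j∈S} ρ_j(N \ {j})`. -/
def fStar {n : ℕ} (f : Finset (Fin n) → ℝ) (S : Finset (Fin n)) : ℝ :=
  f S - ∑ j ∈ S, marginal f j (Finset.univ \ {j})

/-!
Write `ρ_j := ρ_j(N \ {j})`. Since `f*(S ∪ {j}) − f*(S) = ρ_j(S) − ρ_j` for `j ∉ S`, the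
inequality reads `f(X) + Σ_{j ∈ S \ X} ρ_j ≤ f(S) + Σ_{j ∈ X \ S} ρ_j(S)`. Both sides bound
`f(S ∪ X)`, by adding elements one at a time and using that marginal returns decrease as the
set grows: adding `X \ S` to `S` gains at most `ρ_j(S)` per element, and adding `S \ X` to `X`
gains at least `ρ_j` per element.
-/

theorem add_marginal_eq {n : ℕ} (f : Finset (Fin n) → ℝ) (j : Fin n) (X : Finset (Fin n)) :
    f X + marginal f j X = f (insert j X) :=
  add_sub_cancel _ _

namespace Submodular

variable {n : ℕ} {f : Finset (Fin n) → ℝ}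

theorem marginal_antitone (hf : Submodular f) {A B : Finset (Fin n)} {j : Fin n}
    (hAB : A ⊆ B) (hj : j ∉ B) : marginal f j B ≤ marginal f j A := by
  have h := hf (insert j A) B
  rw [Finset.insert_inter_of_notMem hj, Finset.inter_eq_left.mpr hAB, Finset.insert_union,
    Finset.union_eq_right.mpr hAB] at h
  unfold marginal
  linarith

theorem union_le_add_sum_marginal (hf : Submodular f) (S : Finset (Fin n))
    {D : Finset (Fin n)} (hD : Disjoint D S) :
    f (S ∪ D) ≤ f S + ∑ j ∈ D, marginal f j S := by
  induction D using Finset.induction_on with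
  | empty => simp
  | @insert a D ha ih =>
    rw [Finset.disjoint_insert_left] at hD
    have hmarg : marginal f a (S ∪ D) ≤ marginal f a S :=
      hf.marginal_antitone Finset.subset_union_left (by simp [hD.1, ha])
    rw [Finset.union_insert, Finset.sum_insert ha]
    linarith [ih hD.2, add_marginal_eq f a (S ∪ D)]

theorem add_sum_marginal_compl_le_union (hf : Submodular f) (Y : Finset (Fin n))
    {D : Finset (Fin n)} (hD : Disjoint D Y) :
    f Y + ∑ j ∈ D, marginal f j (Finset.univ \ {j}) ≤ f (Y ∪ D) := by
  induction D using Finset.induction_on with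
  | empty => simp
  | @insert a D ha ih =>
    rw [Finset.disjoint_insert_left] at hD
    have hmarg : marginal f a (Finset.univ \ {a}) ≤ marginal f a (Y ∪ D) :=
      hf.marginal_antitone (fun x hx => by grind) (by simp)
    rw [Finset.union_insert, Finset.sum_insert ha]
    linarith [ih hD.2, add_marginal_eq f a (Y ∪ D)]

end Submodular

theorem fStar_insert_sub_fStar {n : ℕ} (f : Finset (Fin n) → ℝ) {S : Finset (Fin n)}
    {j : Fin n} (hj : j ∉ S) :
    fStar f (insert j S) - fStar f S =
      marginal f j S - marginal f j (Finset.univ \ {j}) := by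
  unfold fStar marginal
  rw [Finset.sum_insert hj]
  ring

theorem submodular_inequality_valid_general {n : ℕ}
    (f : Finset (Fin n) → ℝ) (hf : Submodular f)
    (S X : Finset (Fin n)) :
    f X ≤ fStar f S + (∑ j ∈ X \ S, (fStar f (insert j S) - fStar f S)) +
      ∑ j ∈ X, marginal f j (Finset.univ \ {j}) := by
  set ρ : Fin n → ℝ := fun j => marginal f j (Finset.univ \ {j})
  have hupper : f (S ∪ X) ≤ f S + ∑ j ∈ X \ S, marginal f j S := by
    simpa using hf.union_le_add_sum_marginal S Finset.sdiff_disjoint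
  have hlower : f X + ∑ j ∈ S \ X, ρ j ≤ f (S ∪ X) := by
    simpa [Finset.union_comm] using
      hf.add_sum_marginal_compl_le_union X (D := S \ X) Finset.sdiff_disjoint
  rw [Finset.sum_congr rfl fun j hj => fStar_insert_sub_fStar f (Finset.mem_sdiff.mp hj).2,
    Finset.sum_sub_distrib]
  have hX := Finset.sum_inter_add_sum_sdiff X S ρ
  have hS := Finset.sum_inter_add_sum_sdiff S X ρ
  rw [Finset.inter_comm] at hS
  unfold fStar
  linarith

/-- Every submodular inequality is valid for the hypograph of a submodular `f`
with `f(∅) = 0`: for all `S, X ⊆ N`,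
`f(X) ≤ f*(S) + Σ_{j ∈ X \ S} [f*(S ∪ {j}) − f*(S)] + Σ_{j∈X} ρ_j(N \ {j})`. -/
theorem submodular_inequality_valid {n : ℕ} (hn : 0 < n)
    (f : Finset (Fin n) → ℝ) (hf : Submodular f) (h0 : f ∅ = 0)
    (S X : Finset (Fin n)) :
    f X ≤ fStar f S + (∑ j ∈ X \ S, (fStar f (insert j S) - fStar f S)) +
      ∑ j ∈ X, marginal f j (Finset.univ \ {j}) :=
  submodular_inequality_valid_general f hf S X
end

section
/- Let f : 2^N → ℝ be submodular with f(∅) = 0, define ρ_j(X) = f(X ∪ {j}) − f(X) and f*(S) = f(S) − Σ_{j∈S} ρ_j(N \ {j}). Then for every X ⊆ N and every w ∈ ℝ, w ≤ f(X) if and only if w ≤ f*(S) + Σ_{j ∈ X \ S} [f*(S ∪ {j}) − f*(S)] + Σ_{j ∈ X} ρ_j(N \ {j}) for every S ⊆ N; in particular, min over S ⊆ N of the right-hand side equals f(X), attained at S = X. -/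
/-- Right-hand side of the submodular inequality associated with `S`,
evaluated on (the binary encoding of) `X`. -/
def subIneqRHS {n : ℕ} (f : Finset (Fin n) → ℝ)
    (S X : Finset (Fin n)) : ℝ :=
  fStar f S + (∑ j ∈ X \ S, (fStar f (insert j S) - fStar f S)) +
    ∑ j ∈ X, marginal f j (Finset.univ \ {j})

/-! Writing `g j = ρ_j(N \ {j})`, the right-hand side for `S` equals
`f(S) + Σ_{j ∈ X \ S} ρ_j(S) − Σ_{j ∈ S \ X} g j`. Adding the elements of `X \ S` to `S` one at a
time and using that marginals decrease along `⊆`, `f(X ∪ S) ≤ f(S) + Σ_{j ∈ X \ S} ρ_j(S)`; adding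
those of `S \ X` to `X`, `f(X ∪ S) ≥ f(X) + Σ_{j ∈ S \ X} g j`. Together, `f(X)` is at most the
right-hand side for every `S`, with equality at `S = X`. -/

open Finset

lemma apply_insert_eq_add_marginal {n : ℕ} (f : Finset (Fin n) → ℝ) (j : Fin n)
    (Y : Finset (Fin n)) :
    f (insert j Y) = f Y + marginal f j Y := by
  simp [marginal]

section

variable {n : ℕ} {f : Finset (Fin n) → ℝ}

lemma marginal_antitone (hf : Submodular f) {A B : Finset (Fin n)} (hAB : A ⊆ B) {j : Fin n}
    (hj : j ∉ B) : marginal f j B ≤ marginal f j A := by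
  have h := hf (insert j A) B
  rw [insert_inter_of_notMem hj, inter_eq_left.mpr hAB, insert_union,
    union_eq_right.mpr hAB] at h
  simp only [marginal]
  linarith

lemma apply_union_le_add_sum_marginal (hf : Submodular f) {S T : Finset (Fin n)}
    (hST : Disjoint S T) :
    f (S ∪ T) ≤ f S + ∑ j ∈ T, marginal f j S := by
  induction T using Finset.induction_on with
  | empty => simp
  | @insert j T hjT ih =>
    obtain ⟨hjS, hST⟩ := disjoint_insert_right.mp hST
    have hjST : j ∉ S ∪ T := by simp [hjS, hjT]
    have hmono := marginal_antitone hf subset_union_left hjST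
    rw [union_insert, apply_insert_eq_add_marginal f, sum_insert hjT]
    linarith [ih hST]

lemma add_sum_marginal_compl_le_apply_union (hf : Submodular f) {X T : Finset (Fin n)}
    (hXT : Disjoint X T) :
    f X + ∑ j ∈ T, marginal f j (univ \ {j}) ≤ f (X ∪ T) := by
  induction T using Finset.induction_on with
  | empty => simp
  | @insert j T hjT ih =>
    obtain ⟨hjX, hXT⟩ := disjoint_insert_right.mp hXT
    have hsub : X ∪ T ⊆ univ \ {j} := fun x hx => by
      simp only [mem_sdiff, mem_univ, mem_singleton, true_and]
      rintro rfl
      simp_all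
    have hmono := marginal_antitone hf hsub (j := j) (by simp)
    rw [union_insert, apply_insert_eq_add_marginal f, sum_insert hjT]
    linarith [ih hXT]

lemma subIneqRHS_eq (S X : Finset (Fin n)) :
    subIneqRHS f S X = f S + ∑ j ∈ X \ S, marginal f j S -
      ∑ j ∈ S \ X, marginal f j (univ \ {j}) := by
  set g : Fin n → ℝ := fun j => marginal f j (univ \ {j})
  have hstep : ∀ j ∈ X \ S, fStar f (insert j S) - fStar f S = marginal f j S - g j := by
    intro j hj
    simp only [fStar, sum_insert (mem_sdiff.mp hj).2, marginal, g]
    ring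
  have hX := sum_inter_add_sum_sdiff X S g
  have hS := sum_inter_add_sum_sdiff S X g
  rw [inter_comm] at hX
  rw [subIneqRHS, sum_congr rfl hstep, sum_sub_distrib, fStar]
  linarith

lemma le_subIneqRHS (hf : Submodular f) (S X : Finset (Fin n)) : f X ≤ subIneqRHS f S X := by
  have hupper := apply_union_le_add_sum_marginal hf (disjoint_sdiff : Disjoint S (X \ S))
  have hlower := add_sum_marginal_compl_le_apply_union hf (disjoint_sdiff : Disjoint X (S \ X))
  rw [union_sdiff_self_eq_union, union_comm] at hupper
  rw [union_sdiff_self_eq_union] at hlower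
  rw [subIneqRHS_eq]
  linarith

lemma subIneqRHS_self (X : Finset (Fin n)) : subIneqRHS f X X = f X := by
  simp [subIneqRHS_eq]

end

theorem submodular_inequalities_exact_general {n : ℕ}
    (f : Finset (Fin n) → ℝ) (hf : Submodular f)
    (X : Finset (Fin n)) (w : ℝ) :
    (w ≤ f X ↔ ∀ S : Finset (Fin n), w ≤ subIneqRHS f S X) ∧
      subIneqRHS f X X = f X :=
  ⟨⟨fun hw S => hw.trans (le_subIneqRHS hf S X),
    fun hw => subIneqRHS_self (f := f) X ▸ hw X⟩, subIneqRHS_self X⟩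

/-- For submodular `f` with `f(∅) = 0`: `w ≤ f(X)` iff `w` is bounded above by
the right-hand side of every submodular inequality; in particular the minimum
over `S ⊆ N` of the right-hand side equals `f(X)`, attained at `S = X`. -/
theorem submodular_inequalities_exact {n : ℕ} (hn : 0 < n)
    (f : Finset (Fin n) → ℝ) (hf : Submodular f) (h0 : f ∅ = 0)
    (X : Finset (Fin n)) (w : ℝ) :
    (w ≤ f X ↔ ∀ S : Finset (Fin n), w ≤ subIneqRHS f S X) ∧
      subIneqRHS f X X = f X :=
  submodular_inequalities_exact_general f hf X w
end

section
/- Let f : ℝ → ℝ be concave with f(0) = 0, let α ≥ 0, and let k be an integer with 1 ≤ k ≤ n. Then every separation inequality is valid for P^1_k: for every permutation δ of N, every integer i_0 with 0 ≤ i_0 ≤ k−1, and every x ∈ {0,1}^n with Σ_{i=1}^n x_i ≤ k, it holds that f(α Σ_{i=1}^n x_i) ≥ Σ_{i=1}^{i_0} ρ_i x_{δ(i)} + Σ_{i=i_0+1}^{n} ψ x_{δ(i)}, where ρ_i := f(iα) − f((i−1)α) and ψ := (f(kα) − f(i_0 α))/(k − i_0). -/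
/-!
Write `g t = f (t * α)`, again concave with `g 0 = 0`. The coefficient of position `j` is the
slope of `g` on `[j, j + 1]` for `j < i₀` and its slope on `[i₀, k]` for `j ≥ i₀`; by concavity
these slopes decrease in `j`. So the sum over the `m ≤ k` positions where `x ∘ δ` is `1` is at
most the sum of the first `m` coefficients. That sum telescopes to `g m` when `m ≤ i₀`, and to
`g i₀ + (m - i₀) ψ` otherwise, which is the chord of `g` over `[i₀, k]` evaluated at `m`, hence at
most `g m`.
-/

open Finset

theorem Antitone.sum_le_sum_range_card {M : Type*} [AddCommMonoid M] [PartialOrder M]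
    [IsOrderedAddMonoid M] {c : ℕ → M} (hc : Antitone c) (A : Finset ℕ) :
    ∑ j ∈ A, c j ≤ ∑ j ∈ range #A, c j := by
  induction A using Finset.induction_on_max with
  | empty => simp
  | insert a s hlt ih =>
    have ha : a ∉ s := fun h => (hlt a h).false
    have hcard : #s ≤ a := by
      simpa using card_le_card fun j hj => mem_range.mpr (hlt j hj)
    rw [sum_insert ha, card_insert_of_notMem ha, sum_range_succ, add_comm]
    exact add_le_add ih (hc hcard)

theorem sum_mul_eq_sum_filter_eq_one {ι : Type*} (s : Finset ι) (w x : ι → ℝ)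
    (hx : ∀ i, x i = 0 ∨ x i = 1) :
    ∑ i ∈ s, w i * x i = ∑ i ∈ s with x i = 1, w i := by
  rw [sum_filter]
  refine sum_congr rfl fun i _ => ?_
  rcases hx i with h | h <;> simp [h]

theorem concaveOn_univ_of_forall {f : ℝ → ℝ}
    (hf : ∀ s t lam : ℝ, 0 ≤ lam → lam ≤ 1 →
      lam * f s + (1 - lam) * f t ≤ f (lam * s + (1 - lam) * t)) :
    ConcaveOn ℝ Set.univ f := by
  refine ⟨convex_univ, fun s _ t _ a b ha hb hab => ?_⟩
  obtain rfl : b = 1 - a := by linarith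
  simpa using hf s t a ha (by linarith)

theorem ConcaveOn.add_mul_slope_le {s : Set ℝ} {f : ℝ → ℝ} (hf : ConcaveOn ℝ s f) {a b c : ℝ}
    (ha : a ∈ s) (hb : b ∈ s) (hc : c ∈ s) (hab : a ≤ b) (hbc : b ≤ c) :
    f a + (b - a) * ((f c - f a) / (c - a)) ≤ f b := by
  rcases hab.eq_or_lt with rfl | hab
  · simp
  have hslope := hf.neg.secant_mono ha hb hc hab.ne' (hab.trans_le hbc).ne' hbc
  simp only [Pi.neg_apply, neg_sub_neg] at hslope
  rw [← neg_sub (f b), ← neg_sub (f c), neg_div, neg_div, neg_le_neg_iff] at hslope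
  have := (le_div_iff₀ (sub_pos.mpr hab)).mp hslope
  linarith

noncomputable def separationCoeff (g : ℝ → ℝ) (i0 k j : ℕ) : ℝ :=
  if j < i0 then g (j + 1) - g j else (g k - g i0) / (k - i0)

section
variable {g : ℝ → ℝ} {i0 k j : ℕ}

theorem separationCoeff_of_lt (hj : j < i0) : separationCoeff g i0 k j = g (j + 1) - g j :=
  if_pos hj

theorem separationCoeff_of_le (hj : i0 ≤ j) :
    separationCoeff g i0 k j = (g k - g i0) / (k - i0) :=
  if_neg hj.not_gt

theorem separationCoeff_antitone (hg : ConcaveOn ℝ Set.univ g) (hk : i0 < k) :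
    Antitone (separationCoeff g i0 k) := by
  refine antitone_nat_of_succ_le fun j => ?_
  rcases lt_trichotomy (j + 1) i0 with hj | rfl | hj
  · rw [separationCoeff_of_lt hj, separationCoeff_of_lt (by omega)]
    have := hg.slope_anti_adjacent (x := j) (y := j + 1) (z := j + 1 + 1) trivial trivial
      (by linarith) (by linarith)
    push_cast
    simpa using this
  · rw [separationCoeff_of_le le_rfl, separationCoeff_of_lt j.lt_succ_self]
    have := hg.slope_anti_adjacent (x := j) (y := j + 1) (z := k) trivial trivial
      (by linarith) (by exact_mod_cast hk)
    push_cast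
    simpa using this
  · rw [separationCoeff_of_le (by omega), separationCoeff_of_le (by omega)]

theorem sum_range_separationCoeff_le (hg : ConcaveOn ℝ Set.univ g) {m : ℕ} (hm : m ≤ k) :
    ∑ j ∈ range m, separationCoeff g i0 k j ≤ g m - g 0 := by
  rcases le_or_gt m i0 with hmi | hmi
  · rw [sum_congr rfl fun j hj => separationCoeff_of_lt ((mem_range.mp hj).trans_le hmi)]
    exact le_of_eq (by simpa using sum_range_sub (fun j : ℕ => g j) m)
  obtain ⟨d, rfl⟩ := Nat.exists_eq_add_of_le hmi.le
  have hprefix : ∑ j ∈ range i0, separationCoeff g i0 k j = g i0 - g 0 := by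
    rw [sum_congr rfl fun j hj => separationCoeff_of_lt (mem_range.mp hj)]
    simpa using sum_range_sub (fun j : ℕ => g j) i0
  have hchord := hg.add_mul_slope_le (a := i0) (b := (i0 + d : ℕ)) (c := k) trivial trivial
    trivial (by exact_mod_cast Nat.le_add_right i0 d) (by exact_mod_cast hm)
  rw [sum_range_add, hprefix, sum_congr rfl fun j _ => separationCoeff_of_le (by omega),
    sum_const, card_range, nsmul_eq_mul]
  push_cast at hchord ⊢
  linarith

end

theorem separation_inequality_valid_general {n : ℕ}
    (f : ℝ → ℝ)
    (hconc : ∀ s t lam : ℝ, 0 ≤ lam → lam ≤ 1 →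
      lam * f s + (1 - lam) * f t ≤ f (lam * s + (1 - lam) * t))
    (h0 : f 0 = 0) (α : ℝ)
    (k : ℕ) (hk1 : 1 ≤ k)
    (δ : Equiv.Perm (Fin n)) (i0 : ℕ) (hi0 : i0 ≤ k - 1)
    (x : Fin n → ℝ) (hx : ∀ i, x i = 0 ∨ x i = 1)
    (hcard : ∑ i : Fin n, x i ≤ (k : ℝ)) :
    ∑ i : Fin n,
        (if (i : ℕ) < i0 then
            f (((i : ℕ) + 1 : ℝ) * α) - f (((i : ℕ) : ℝ) * α)
          else (f ((k : ℝ) * α) - f ((i0 : ℝ) * α)) / ((k : ℝ) - (i0 : ℝ))) *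
          x (δ i)
      ≤ f (α * ∑ i : Fin n, x i) := by
  set g : ℝ → ℝ := fun t => f (t * α)
  have hg : ConcaveOn ℝ Set.univ g :=
    (concaveOn_univ_of_forall hconc).comp_linearMap (LinearMap.mulRight ℝ α)
  set S := univ.filter fun i => x (δ i) = 1
  have hsum : ∑ i, x i = #S := by
    rw [← Equiv.sum_comp δ]
    simpa using sum_mul_eq_sum_filter_eq_one univ 1 (x ∘ δ) fun i => hx (δ i)
  have hSk : #S ≤ k := by exact_mod_cast hsum ▸ hcard
  calc _ = ∑ i ∈ S, separationCoeff g i0 k i :=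
        sum_mul_eq_sum_filter_eq_one univ _ (x ∘ δ) fun i => hx (δ i)
    _ = ∑ j ∈ S.map Fin.valEmbedding, separationCoeff g i0 k j :=
        (sum_map S Fin.valEmbedding _).symm
    _ ≤ ∑ j ∈ range #S, separationCoeff g i0 k j := by
        simpa using (separationCoeff_antitone hg (by omega)).sum_le_sum_range_card
          (S.map Fin.valEmbedding)
    _ ≤ g #S - g 0 := sum_range_separationCoeff_le hg hSk
    _ = f (α * ∑ i, x i) := by simp [g, h0, hsum, mul_comm]

/-- Validity of the separation inequalities for the cardinality-constrained
epigraph `P^1_k` of `x ↦ f(α Σ_i x_i)` with `f` concave, `f(0) = 0`, `α ≥ 0`: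
for every permutation `δ` of `N`, every integer `0 ≤ i_0 ≤ k−1`, and every
binary `x` with `Σ_i x_i ≤ k`,
`f(α Σ_i x_i) ≥ Σ_{i=1}^{i_0} ρ_i x_{δ(i)} + Σ_{i=i_0+1}^n ψ x_{δ(i)}`,
where `ρ_i = f(iα) − f((i−1)α)` and `ψ = (f(kα) − f(i_0 α))/(k − i_0)`.
(Positions `i = 1,…,n` are encoded 0-based by `Fin n`.) -/
theorem separation_inequality_valid {n : ℕ} (hn : 0 < n)
    (f : ℝ → ℝ)
    (hconc : ∀ s t lam : ℝ, 0 ≤ lam → lam ≤ 1 →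
      lam * f s + (1 - lam) * f t ≤ f (lam * s + (1 - lam) * t))
    (h0 : f 0 = 0) (α : ℝ) (hα : 0 ≤ α)
    (k : ℕ) (hk1 : 1 ≤ k) (hkn : k ≤ n)
    (δ : Equiv.Perm (Fin n)) (i0 : ℕ) (hi0 : i0 ≤ k - 1)
    (x : Fin n → ℝ) (hx : ∀ i, x i = 0 ∨ x i = 1)
    (hcard : ∑ i : Fin n, x i ≤ (k : ℝ)) :
    ∑ i : Fin n,
        (if (i : ℕ) < i0 then
            f (((i : ℕ) + 1 : ℝ) * α) - f (((i : ℕ) : ℝ) * α)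
          else (f ((k : ℝ) * α) - f ((i0 : ℝ) * α)) / ((k : ℝ) - (i0 : ℝ))) *
          x (δ i)
      ≤ f (α * ∑ i : Fin n, x i) :=
  separation_inequality_valid_general f hconc h0 α k hk1 δ i0 hi0 x hx hcard
end

section
/- Let f : (k+1)^N → ℝ be a k-submodular function. For each i ∈ N and q ∈ {1,…,k}, let ξ_i^q = min{ ρ_{q,i}(S) : S ∈ (k+1)^{N\{i}} with ∪_{p=1}^k S_p = N \ {i} }. Then the function f*(X) := f(X) − Σ_{q=1}^k Σ_{i∈X_q} ξ_i^q is k-submodular and monotone non-decreasing. -/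
/-- A `k`-set: a `k`-tuple of pairwise disjoint subsets of `N = {1,…,n}`. -/
def IsKSet {n k : ℕ} (S : Fin k → Finset (Fin n)) : Prop :=
  ∀ p q : Fin k, p ≠ q → Disjoint (S p) (S q)

/-- Component-wise intersection `X ⊓ Y` of two `k`-sets. -/
def kInf {n k : ℕ} (X Y : Fin k → Finset (Fin n)) : Fin k → Finset (Fin n) :=
  fun q => X q ∩ Y q

/-- The operation `X ⊔ Y`: `(X ⊔ Y)_q = (X_q ∪ Y_q) \ ∪_{p ≠ q}(X_p ∪ Y_p)`. -/
def kSup {n k : ℕ} (X Y : Fin k → Finset (Fin n)) : Fin k → Finset (Fin n) :=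
  fun q => (X q ∪ Y q) \ (Finset.univ.erase q).biUnion (fun p => X p ∪ Y p)

/-- `f : (k+1)^N → ℝ` is `k`-submodular if
`f(X) + f(Y) ≥ f(X ⊓ Y) + f(X ⊔ Y)` for all `k`-sets `X, Y`. -/
def KSubmodular {n k : ℕ} (f : (Fin k → Finset (Fin n)) → ℝ) : Prop :=
  ∀ X Y : Fin k → Finset (Fin n), IsKSet X → IsKSet Y →
    f (kInf X Y) + f (kSup X Y) ≤ f X + f Y

/-- The marginal return `ρ_{q,i}(X) = f(X_1,…,X_q ∪ {i},…,X_k) − f(X)`. -/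
def kMarginal {n k : ℕ} (f : (Fin k → Finset (Fin n)) → ℝ) (q : Fin k)
    (i : Fin n) (X : Fin k → Finset (Fin n)) : ℝ :=
  f (Function.update X q (insert i (X q))) - f X

/-- `ξ_i^q = min{ ρ_{q,i}(S) : S ∈ (k+1)^{N\{i}}, ∪_p S_p = N \ {i} }`. -/
noncomputable def kXi {n k : ℕ} (f : (Fin k → Finset (Fin n)) → ℝ)
    (i : Fin n) (q : Fin k) : ℝ :=
  sInf { r : ℝ | ∃ S : Fin k → Finset (Fin n), IsKSet S ∧
    Finset.univ.biUnion S = Finset.univ \ {i} ∧ r = kMarginal f q i S }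

/-!
Orthant submodularity says that `ρ_{q,i}` only decreases along inclusions of `k`-sets avoiding
`i`. Every such `k`-set extends to one covering `N ∖ {i}`, so `ξ_i^q ≤ ρ_{q,i}(X)` for all of
them: adding an element never decreases `f*`, which gives monotonicity. For `k`-submodularity,
an element lying in `X_p` and in `Y_q` with `p ≠ q` may be deleted from `Y`: this leaves
`X ⊓ Y` unchanged and adds it to the `p`-th component of `X ⊔ Y`, and both changes move `f*`
the right way. By induction it remains to treat pairs without such conflicts, where `X ⊔ Y` is
the componentwise union and the modular part of `f*` cancels.
-/

section

variable {n k : ℕ} {X Y Z W : Fin k → Finset (Fin n)} {p q r : Fin k} {i x : Fin n}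

def kInsert (X : Fin k → Finset (Fin n)) (q : Fin k) (i : Fin n) : Fin k → Finset (Fin n) :=
  Function.update X q (insert i (X q))

def kErase (X : Fin k → Finset (Fin n)) (i : Fin n) : Fin k → Finset (Fin n) :=
  fun q => (X q).erase i

theorem mem_kInsert : x ∈ kInsert X q i r ↔ (x = i ∧ r = q) ∨ x ∈ X r := by
  rcases eq_or_ne r q with rfl | h <;> simp [kInsert, Function.update_of_ne, *]

theorem mem_kErase : x ∈ kErase X i r ↔ x ≠ i ∧ x ∈ X r :=
  Finset.mem_erase

theorem mem_kInf : x ∈ kInf X Y r ↔ x ∈ X r ∧ x ∈ Y r :=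
  Finset.mem_inter

theorem mem_kSup :
    x ∈ kSup X Y r ↔ (x ∈ X r ∨ x ∈ Y r) ∧ ∀ s, s ≠ r → x ∉ X s ∧ x ∉ Y s := by
  simp [kSup]

theorem IsKSet.notMem (hX : IsKSet X) (hpq : p ≠ q) (hx : x ∈ X p) : x ∉ X q :=
  Finset.disjoint_left.mp (hX p q hpq) hx

theorem IsKSet.mono (hY : IsKSet Y) (hXY : ∀ q, X q ⊆ Y q) : IsKSet X :=
  fun p q hpq => (hY p q hpq).mono (hXY p) (hXY q)

theorem IsKSet.kInsert (hX : IsKSet X) (hi : ∀ p, i ∉ X p) (q : Fin k) :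
    IsKSet (kInsert X q i) := by
  refine fun p r hpr => Finset.disjoint_left.mpr fun {x} hxp hxr => ?_
  rw [mem_kInsert] at hxp hxr
  rcases hxp with ⟨rfl, rfl⟩ | hxp
  · exact hxr.elim (fun h => hpr h.2.symm) (hi r)
  · exact hxr.elim (fun h => hi p (h.1 ▸ hxp)) (hX.notMem hpr hxp)

theorem IsKSet.kErase (hX : IsKSet X) (i : Fin n) : IsKSet (kErase X i) :=
  hX.mono fun _ => Finset.erase_subset _ _

theorem isKSet_kSup (X Y : Fin k → Finset (Fin n)) : IsKSet (kSup X Y) := by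
  intro p r hpr
  rw [Finset.disjoint_left]
  intro x
  simp only [mem_kSup]
  grind

theorem kInsert_kErase (hX : IsKSet X) (hi : i ∈ X q) : kInsert (kErase X i) q i = X := by
  funext r; ext x
  simp only [mem_kInsert, mem_kErase]
  rcases eq_or_ne x i with rfl | hx
  · have := fun h => hX.notMem (q := r) h hi
    grind
  · simp [hx]

theorem sum_card_kErase_lt (hi : i ∈ X q) :
    ∑ p, (kErase X i p).card < ∑ p, (X p).card :=
  Finset.sum_lt_sum (fun _ _ => Finset.card_erase_le)
    ⟨q, Finset.mem_univ q, Finset.card_erase_lt_of_mem hi⟩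

theorem sum_sum_kInsert (w : Fin n → Fin k → ℝ) (hi : i ∉ X q) :
    ∑ p, ∑ j ∈ kInsert X q i p, w j p = ∑ p, ∑ j ∈ X p, w j p + w i q := by
  have hterm : ∀ p, ∑ j ∈ kInsert X q i p, w j p =
      ∑ j ∈ X p, w j p + if p = q then w i q else 0 := by
    intro p
    rcases eq_or_ne p q with rfl | hpq
    · simp [kInsert, Finset.sum_insert hi, add_comm]
    · simp [kInsert, hpq]
  simp only [hterm, Finset.sum_add_distrib, Finset.sum_ite_eq', Finset.mem_univ, if_true]

theorem kMarginal_eq (f : (Fin k → Finset (Fin n)) → ℝ) (q : Fin k) (i : Fin n)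
    (X : Fin k → Finset (Fin n)) : kMarginal f q i X = f (kInsert X q i) - f X :=
  rfl

theorem kInf_kInsert_of_le (hZW : ∀ r, Z r ⊆ W r) (hi : ∀ r, i ∉ W r) :
    kInf (kInsert Z q i) W = Z := by
  funext r; ext x
  simp only [mem_kInf, mem_kInsert]
  grind

theorem kSup_kInsert_of_le (hW : IsKSet W) (hZW : ∀ r, Z r ⊆ W r) (hi : ∀ r, i ∉ W r) :
    kSup (kInsert Z q i) W = kInsert W q i := by
  funext r; ext x
  simp only [mem_kSup, mem_kInsert]
  have := fun s (h : r ≠ s) => hW.notMem (x := x) h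
  grind

theorem KSubmodular.kMarginal_le {f : (Fin k → Finset (Fin n)) → ℝ} (hf : KSubmodular f)
    (hW : IsKSet W) (hZW : ∀ r, Z r ⊆ W r) (hi : ∀ r, i ∉ W r) (q : Fin k) :
    kMarginal f q i W ≤ kMarginal f q i Z := by
  have key := hf (kInsert Z q i) W
    ((hW.mono hZW).kInsert (fun r hr => hi r (hZW r hr)) q) hW
  rw [kInf_kInsert_of_le hZW hi, kSup_kInsert_of_le hW hZW hi] at key
  rw [kMarginal_eq, kMarginal_eq]
  linarith

theorem exists_kSet_le_biUnion_eq (hZ : IsKSet Z) (hi : ∀ p, i ∉ Z p) (q : Fin k) :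
    ∃ W, IsKSet W ∧ (∀ r, Z r ⊆ W r) ∧ Finset.univ.biUnion W = Finset.univ \ {i} := by
  set W := Function.update Z q (Finset.univ \ insert i ((Finset.univ.erase q).biUnion Z))
  have hmem : ∀ r x, x ∈ W r ↔ if r = q then x ≠ i ∧ ∀ s ≠ q, x ∉ Z s else x ∈ Z r := by
    intro r x
    rcases eq_or_ne r q with rfl | hrq
    · simp [W]
    · simp [W, hrq]
  refine ⟨W, fun p r hpr => Finset.disjoint_left.mpr fun {x} hxp hxr => ?_,
    fun r x hx => ?_, ?_⟩
  · rw [hmem] at hxp hxr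
    have := fun s t (h : s ≠ t) => hZ.notMem (x := x) h
    grind
  · rw [hmem]
    have := fun s (h : r ≠ s) => hZ.notMem h hx
    grind
  · ext x
    simp only [Finset.mem_biUnion, Finset.mem_univ, true_and, Finset.mem_sdiff,
      Finset.mem_singleton]
    constructor
    · rintro ⟨r, hr⟩ rfl
      rw [hmem] at hr
      split_ifs at hr
      exacts [hr.1 rfl, hi r hr]
    · intro hx
      by_cases h : ∃ s ≠ q, x ∈ Z s
      · obtain ⟨s, hs, hxs⟩ := h
        exact ⟨s, by rwa [hmem, if_neg hs]⟩
      · push Not at h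
        exact ⟨q, by rw [hmem, if_pos rfl]; exact ⟨hx, h⟩⟩

theorem KSubmodular.kXi_le_kMarginal {f : (Fin k → Finset (Fin n)) → ℝ} (hf : KSubmodular f)
    (hZ : IsKSet Z) (hi : ∀ p, i ∉ Z p) (q : Fin k) : kXi f i q ≤ kMarginal f q i Z := by
  obtain ⟨W, hW, hZW, hWi⟩ := exists_kSet_le_biUnion_eq hZ hi q
  have hiW : ∀ r, i ∉ W r := fun r hr => by
    have h := Finset.mem_biUnion.mpr ⟨r, Finset.mem_univ r, hr⟩
    simp [hWi] at h
  have hbdd : BddBelow { r : ℝ | ∃ S : Fin k → Finset (Fin n), IsKSet S ∧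
      Finset.univ.biUnion S = Finset.univ \ {i} ∧ r = kMarginal f q i S } :=
    ((Set.finite_range (kMarginal f q i)).subset
      (by rintro _ ⟨S, -, -, rfl⟩; exact ⟨S, rfl⟩)).bddBelow
  calc kXi f i q ≤ kMarginal f q i W := csInf_le hbdd ⟨W, hW, hWi, rfl⟩
    _ ≤ kMarginal f q i Z := hf.kMarginal_le hW hZW hiW q

theorem le_of_le_kInsert {g : (Fin k → Finset (Fin n)) → ℝ}
    (hg : ∀ X q i, IsKSet X → (∀ p, i ∉ X p) → g X ≤ g (kInsert X q i))
    {X Y : Fin k → Finset (Fin n)} (hY : IsKSet Y) (hXY : ∀ q, X q ⊆ Y q) : g X ≤ g Y := by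
  by_cases h : ∃ q, ∃ i ∈ Y q, i ∉ X q
  · obtain ⟨q, i, hiY, hiX⟩ := h
    have hXY' : ∀ r, X r ⊆ kErase Y i r := fun r x hx => by
      refine mem_kErase.mpr ⟨?_, hXY r hx⟩
      rintro rfl
      rcases eq_or_ne r q with rfl | hrq
      · exact hiX hx
      · exact hY.notMem hrq (hXY r hx) hiY
    have hdecr := sum_card_kErase_lt hiY
    calc g X ≤ g (kErase Y i) := le_of_le_kInsert hg (hY.kErase i) hXY'
      _ ≤ g (kInsert (kErase Y i) q i) :=
        hg _ q i (hY.kErase i) fun p => by simp [mem_kErase]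
      _ = g Y := by rw [kInsert_kErase hY hiY]
  · push Not at h
    rw [show X = Y from funext fun q => (hXY q).antisymm (h q)]
termination_by ∑ p, (Y p).card

theorem kSup_eq_union (hX : IsKSet X) (hY : IsKSet Y)
    (hXY : ∀ p q, p ≠ q → Disjoint (X p) (Y q)) : kSup X Y = fun r => X r ∪ Y r := by
  funext r; ext x
  simp only [mem_kSup, Finset.mem_union]
  have : ∀ s t, s ≠ t → x ∈ X s → x ∉ Y t :=
    fun s t h hx => Finset.disjoint_left.mp (hXY s t h) hx
  have := fun s t (h : s ≠ t) => hX.notMem (x := x) h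
  have := fun s t (h : s ≠ t) => hY.notMem (x := x) h
  grind

theorem kInf_kErase_of_conflict (hX : IsKSet X) (hY : IsKSet Y) (hpq : p ≠ q)
    (hiX : i ∈ X p) (hiY : i ∈ Y q) : kInf X (kErase Y i) = kInf X Y := by
  funext r; ext x
  simp only [mem_kInf, mem_kErase]
  have := fun r (h : p ≠ r) => hX.notMem h hiX
  have := fun r (h : q ≠ r) => hY.notMem h hiY
  grind

theorem notMem_kSup_of_conflict (hpq : p ≠ q) (hiX : i ∈ X p) (hiY : i ∈ Y q) (r : Fin k) :
    i ∉ kSup X Y r := by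
  rw [mem_kSup]
  grind

theorem kSup_kErase_of_mem (hX : IsKSet X) (hiX : i ∈ X p) :
    kSup X (kErase Y i) = kInsert (kSup X Y) p i := by
  funext r; ext x
  simp only [mem_kSup, mem_kInsert, mem_kErase]
  have := fun s (h : p ≠ s) => hX.notMem h hiX
  grind

theorem kInf_add_kSup_le_of_le_kInsert {g : (Fin k → Finset (Fin n)) → ℝ}
    (hg : ∀ X q i, IsKSet X → (∀ p, i ∉ X p) → g X ≤ g (kInsert X q i))
    (hcompat : ∀ X Y, IsKSet X → IsKSet Y → (∀ p q, p ≠ q → Disjoint (X p) (Y q)) →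
      g (kInf X Y) + g (kSup X Y) ≤ g X + g Y)
    {X Y : Fin k → Finset (Fin n)} (hX : IsKSet X) (hY : IsKSet Y) :
    g (kInf X Y) + g (kSup X Y) ≤ g X + g Y := by
  by_cases h : ∃ p q i, p ≠ q ∧ i ∈ X p ∧ i ∈ Y q
  · obtain ⟨p, q, i, hpq, hiX, hiY⟩ := h
    have hdecr := sum_card_kErase_lt hiY
    have hrec := kInf_add_kSup_le_of_le_kInsert hg hcompat hX (hY.kErase i)
    rw [kInf_kErase_of_conflict hX hY hpq hiX hiY, kSup_kErase_of_mem hX hiX] at hrec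
    have hSup := hg (kSup X Y) p i (isKSet_kSup X Y) (notMem_kSup_of_conflict hpq hiX hiY)
    have hErase := hg (kErase Y i) q i (hY.kErase i) fun r => by simp [mem_kErase]
    rw [kInsert_kErase hY hiY] at hErase
    linarith
  · push Not at h
    exact hcompat X Y hX hY fun p q hpq => Finset.disjoint_left.mpr fun x hx => h p q x hpq hx
termination_by ∑ p, (Y p).card

noncomputable def kCounterpart (f : (Fin k → Finset (Fin n)) → ℝ)
    (X : Fin k → Finset (Fin n)) : ℝ :=
  f X - ∑ q : Fin k, ∑ i ∈ X q, kXi f i q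

namespace KSubmodular

variable {f : (Fin k → Finset (Fin n)) → ℝ}

theorem kCounterpart_le_kInsert (hf : KSubmodular f) (hX : IsKSet X) (hi : ∀ p, i ∉ X p)
    (q : Fin k) : kCounterpart f X ≤ kCounterpart f (kInsert X q i) := by
  have hxi := hf.kXi_le_kMarginal hX hi q
  rw [kMarginal_eq] at hxi
  rw [kCounterpart, kCounterpart, sum_sum_kInsert (fun j p => kXi f j p) (hi q)]
  linarith

theorem kCounterpart_kInf_add_kSup_le (hf : KSubmodular f) (hX : IsKSet X) (hY : IsKSet Y)
    (hXY : ∀ p q, p ≠ q → Disjoint (X p) (Y q)) :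
    kCounterpart f (kInf X Y) + kCounterpart f (kSup X Y) ≤
      kCounterpart f X + kCounterpart f Y := by
  have hsum : ∑ q, ∑ i ∈ kInf X Y q, kXi f i q + ∑ q, ∑ i ∈ kSup X Y q, kXi f i q =
      ∑ q, ∑ i ∈ X q, kXi f i q + ∑ q, ∑ i ∈ Y q, kXi f i q := by
    simp only [kSup_eq_union hX hY hXY, kInf, ← Finset.sum_add_distrib]
    exact Finset.sum_congr rfl fun q _ => (add_comm _ _).trans Finset.sum_union_inter
  have := hf X Y hX hY
  simp only [kCounterpart]
  linarith

theorem kSubmodular_kCounterpart (hf : KSubmodular f) : KSubmodular (kCounterpart f) :=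
  fun _ _ hX hY => kInf_add_kSup_le_of_le_kInsert
    (fun _ q _ hX hi => hf.kCounterpart_le_kInsert hX hi q)
    (fun _ _ => hf.kCounterpart_kInf_add_kSup_le) hX hY

end KSubmodular

end

theorem monotone_counterpart_kSubmodular_general {n k : ℕ}
    (f : (Fin k → Finset (Fin n)) → ℝ) (hf : KSubmodular f)
    (fs : (Fin k → Finset (Fin n)) → ℝ)
    (hfs : ∀ X, fs X = f X - ∑ q : Fin k, ∑ i ∈ X q, kXi f i q) :
    KSubmodular fs ∧
      (∀ X Y : Fin k → Finset (Fin n), IsKSet X → IsKSet Y →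
        (∀ q, X q ⊆ Y q) → fs X ≤ fs Y) := by
  obtain rfl : fs = kCounterpart f := funext hfs
  exact ⟨hf.kSubmodular_kCounterpart, fun _ _ _ hY hXY =>
    le_of_le_kInsert (fun _ q _ hX hi => hf.kCounterpart_le_kInsert hX hi q) hY hXY⟩

/-- For any `k`-submodular `f`, the function
`f*(X) = f(X) − Σ_{q=1}^k Σ_{i ∈ X_q} ξ_i^q`
is `k`-submodular and monotone non-decreasing. -/
theorem monotone_counterpart_kSubmodular {n k : ℕ} (hn : 0 < n) (hk : 0 < k)
    (f : (Fin k → Finset (Fin n)) → ℝ) (hf : KSubmodular f)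
    (fs : (Fin k → Finset (Fin n)) → ℝ)
    (hfs : ∀ X, fs X = f X - ∑ q : Fin k, ∑ i ∈ X q, kXi f i q) :
    KSubmodular fs ∧
      (∀ X Y : Fin k → Finset (Fin n), IsKSet X → IsKSet Y →
        (∀ q, X q ⊆ Y q) → fs X ≤ fs Y) :=
  monotone_counterpart_kSubmodular_general f hf fs hfs
end

section
/- Let f : 3^N → ℝ be bisubmodular with f(∅,∅) = 0. For any permutation δ = (δ_1,…,δ_n) of N and any σ ∈ {±1}^n, let π ∈ ℝ^n be the output of the signed greedy procedure: starting from S_1 = S_2 = ∅, for i = 1,…,n, if σ_{δ_i} = 1 set π_{δ_i} = f(S_1∪{δ_i}, S_2) − f(S_1, S_2) and add δ_i to S_1, otherwise set π_{δ_i} = −f(S_1, S_2∪{δ_i}) + f(S_1, S_2) and add δ_i to S_2. Then the extremal poly-bimatroid inequality w ≥ π^⊤x is valid for the epigraph of f: for every (S_1, S_2) ∈ 3^N with ternary encoding x ∈ {0,±1}^n, f(S_1, S_2) ≥ π^⊤ x. -/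
open scoped Classical

/-- `f : 3^N → ℝ` (defined on ordered pairs of disjoint subsets of `N`) is
bisubmodular if `f(X) + f(Y) ≥ f(X ⊓ Y) + f(X ⊔ Y)` for all bisets `X, Y`,
where `X ⊓ Y = (X_1∩Y_1, X_2∩Y_2)` and
`X ⊔ Y = ((X_1∪Y_1)\(X_2∪Y_2), (X_2∪Y_2)\(X_1∪Y_1))`. -/
def Bisubmodular {n : ℕ} (f : Finset (Fin n) → Finset (Fin n) → ℝ) : Prop :=
  ∀ X1 X2 Y1 Y2 : Finset (Fin n), Disjoint X1 X2 → Disjoint Y1 Y2 →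
    f (X1 ∩ Y1) (X2 ∩ Y2) +
        f ((X1 ∪ Y1) \ (X2 ∪ Y2)) ((X2 ∪ Y2) \ (X1 ∪ Y1)) ≤
      f X1 X2 + f Y1 Y2

/-- First component built by the signed greedy procedure before processing
position `i`: the elements `δ_l` with `l < i` and sign `+1`. -/
noncomputable def sgFirst {n : ℕ} (δ : Equiv.Perm (Fin n)) (σ : Fin n → ℝ)
    (i : Fin n) : Finset (Fin n) :=
  (Finset.univ.filter (fun l : Fin n => l < i ∧ σ (δ l) = 1)).image δ

/-- Second component built by the signed greedy procedure before processing
position `i`: the elements `δ_l` with `l < i` and sign `−1`. -/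
noncomputable def sgSecond {n : ℕ} (δ : Equiv.Perm (Fin n)) (σ : Fin n → ℝ)
    (i : Fin n) : Finset (Fin n) :=
  (Finset.univ.filter (fun l : Fin n => l < i ∧ σ (δ l) ≠ 1)).image δ

/-- The coefficient vector `π` output by the signed greedy procedure for a
permutation `δ` and a sign vector `σ ∈ {±1}^n`. -/
noncomputable def signedGreedy {n : ℕ} (f : Finset (Fin n) → Finset (Fin n) → ℝ)
    (δ : Equiv.Perm (Fin n)) (σ : Fin n → ℝ) : Fin n → ℝ :=
  fun j =>
    if σ j = 1 then
      f (insert j (sgFirst δ σ (δ.symm j))) (sgSecond δ σ (δ.symm j)) -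
        f (sgFirst δ σ (δ.symm j)) (sgSecond δ σ (δ.symm j))
    else
      -f (sgFirst δ σ (δ.symm j)) (insert j (sgSecond δ σ (δ.symm j))) +
        f (sgFirst δ σ (δ.symm j)) (sgSecond δ σ (δ.symm j))

/-!
Write `P_k` for the biset built by the signed greedy procedure after `k` steps and `Y_k` for the
biset that agrees with `P_k` on the first `k` elements of `δ` and with `(S_1, S_2)` on the rest, so
that `Y_0 = (S_1, S_2)` and `Y_n = P_n`. When the `k`-th element `e` is processed, the gap
`f(Y_k) - f(P_k)` drops by at least `π_e x_e`: with equality if `e` lies in `Y_k` on the side the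
greedy step puts it, by orthant submodularity (one use of bisubmodularity) if `e ∉ Y_k`, and by two
uses of bisubmodularity if `e` lies on the opposite side. The case `σ_e = -1` is the case
`σ_e = 1` for `(X_1, X_2) ↦ f(X_2, X_1)`. Summing the drops telescopes to `f(S_1, S_2) - f(∅, ∅)`.
-/

open Finset

theorem Finset.eq_ite_insert_erase {α : Type*} [DecidableEq α] {Y : Finset α} {e : α}
    {p : Prop} [Decidable p] (h : e ∈ Y ↔ p) :
    Y = if p then insert e (Y.erase e) else Y.erase e := by
  split_ifs with hp
  · exact (insert_erase (h.2 hp)).symm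
  · exact (erase_eq_of_notMem (mt h.1 hp)).symm

section Bisubmodular

variable {n : ℕ} {f : Finset (Fin n) → Finset (Fin n) → ℝ}

theorem Bisubmodular.swap (hf : Bisubmodular f) : Bisubmodular fun X1 X2 => f X2 X1 :=
  fun X1 X2 Y1 Y2 hX hY => hf X2 X1 Y2 Y1 hX.symm hY.symm

variable {A B X1 X2 : Finset (Fin n)} {e : Fin n}

theorem Bisubmodular.insert_left_sub_le (hf : Bisubmodular f) (hX : Disjoint X1 X2)
    (hA : A ⊆ X1) (hB : B ⊆ X2) (he1 : e ∉ X1) (he2 : e ∉ X2) :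
    f (insert e X1) X2 - f X1 X2 ≤ f (insert e A) B - f A B := by
  have hAB : Disjoint (insert e A) B :=
    disjoint_insert_left.2 ⟨fun h => he2 (hB h), hX.mono hA hB⟩
  have key := hf X1 X2 (insert e A) B hX hAB
  rw [disjoint_left] at hX
  rw [subset_iff] at hA hB
  have h1 : X1 ∩ insert e A = A := by grind
  have h2 : X2 ∩ B = B := by grind
  have h3 : (X1 ∪ insert e A) \ (X2 ∪ B) = insert e X1 := by grind
  have h4 : (X2 ∪ B) \ (X1 ∪ insert e A) = X2 := by grind
  rw [h1, h2, h3, h4] at key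
  linarith

theorem Bisubmodular.add_le_insert_left_add_insert_right (hf : Bisubmodular f)
    (hX : Disjoint X1 X2) (hA : A ⊆ X1) (hB : B ⊆ X2) (he1 : e ∉ X1) (he2 : e ∉ X2) :
    f A B + f X1 X2 ≤ f (insert e A) B + f X1 (insert e X2) := by
  have hX' : Disjoint X1 (insert e X2) := disjoint_insert_right.2 ⟨he1, hX⟩
  have hAB : Disjoint (insert e A) B :=
    disjoint_insert_left.2 ⟨fun h => he2 (hB h), hX.mono hA hB⟩
  have key := hf X1 (insert e X2) (insert e A) B hX' hAB
  rw [disjoint_left] at hX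
  rw [subset_iff] at hA hB
  have h1 : X1 ∩ insert e A = A := by grind
  have h2 : insert e X2 ∩ B = B := by grind
  have h3 : (X1 ∪ insert e A) \ (insert e X2 ∪ B) = X1 := by grind
  have h4 : (insert e X2 ∪ B) \ (X1 ∪ insert e A) = X2 := by grind
  rw [h1, h2, h3, h4] at key
  linarith

variable {S1 S2 : Finset (Fin n)}

def ternary (S1 S2 : Finset (Fin n)) (j : Fin n) : ℝ :=
  if j ∈ S1 then 1 else if j ∈ S2 then -1 else 0

theorem ternary_swap (hS : Disjoint S1 S2) (j : Fin n) : ternary S2 S1 j = -ternary S1 S2 j := by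
  have : j ∈ S1 → j ∉ S2 := fun h => disjoint_left.1 hS h
  unfold ternary
  split_ifs <;> simp_all

theorem Bisubmodular.marginal_mul_ternary_le_insert_left (hf : Bisubmodular f)
    (hX : Disjoint X1 X2) (hA : A ⊆ X1) (hB : B ⊆ X2) (he1 : e ∉ X1) (he2 : e ∉ X2)
    (hS : Disjoint S1 S2) :
    (f (insert e A) B - f A B) * ternary S1 S2 e ≤
      (f (if e ∈ S1 then insert e X1 else X1) (if e ∈ S2 then insert e X2 else X2) - f A B) -
        (f (insert e X1) X2 - f (insert e A) B) := by
  have hmarg := hf.insert_left_sub_le hX hA hB he1 he2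
  by_cases h1 : e ∈ S1
  · have h2 : e ∉ S2 := disjoint_left.1 hS h1
    simp only [ternary, h1, h2, if_true, if_false]
    linarith
  by_cases h2 : e ∈ S2
  · have hcross := hf.add_le_insert_left_add_insert_right hX hA hB he1 he2
    simp only [ternary, h1, h2, if_true, if_false]
    linarith
  · simp only [ternary, h1, h2, if_false]
    linarith

theorem Bisubmodular.marginal_mul_ternary_le_insert_right (hf : Bisubmodular f)
    (hX : Disjoint X1 X2) (hA : A ⊆ X1) (hB : B ⊆ X2) (he1 : e ∉ X1) (he2 : e ∉ X2)
    (hS : Disjoint S1 S2) :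
    (-f A (insert e B) + f A B) * ternary S1 S2 e ≤
      (f (if e ∈ S1 then insert e X1 else X1) (if e ∈ S2 then insert e X2 else X2) - f A B) -
        (f X1 (insert e X2) - f A (insert e B)) := by
  have := hf.swap.marginal_mul_ternary_le_insert_left hX.symm hB hA he2 he1 hS.symm
  rw [ternary_swap hS] at this
  linarith

end Bisubmodular

section GreedySplice

variable {n : ℕ} (δ : Equiv.Perm (Fin n)) (σ : Fin n → ℝ) (S1 S2 : Finset (Fin n))

noncomputable def greedySplice (k : ℕ) : Finset (Fin n) × Finset (Fin n) :=
  (({j | if (δ.symm j : ℕ) < k then σ j = 1 else j ∈ S1} : Finset (Fin n)),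
    ({j | if (δ.symm j : ℕ) < k then σ j ≠ 1 else j ∈ S2} : Finset (Fin n)))

theorem mem_greedySplice_fst {k : ℕ} {j : Fin n} :
    j ∈ (greedySplice δ σ S1 S2 k).1 ↔ if (δ.symm j : ℕ) < k then σ j = 1 else j ∈ S1 := by
  simp [greedySplice]

theorem mem_greedySplice_snd {k : ℕ} {j : Fin n} :
    j ∈ (greedySplice δ σ S1 S2 k).2 ↔ if (δ.symm j : ℕ) < k then σ j ≠ 1 else j ∈ S2 := by
  simp [greedySplice]

theorem sgFirst_eq_greedySplice (i : Fin n) : sgFirst δ σ i = (greedySplice δ σ ∅ ∅ i).1 := by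
  ext j
  obtain ⟨l, rfl⟩ := δ.surjective j
  simp [sgFirst, δ.injective.mem_finset_image, mem_greedySplice_fst]

theorem sgSecond_eq_greedySplice (i : Fin n) : sgSecond δ σ i = (greedySplice δ σ ∅ ∅ i).2 := by
  ext j
  obtain ⟨l, rfl⟩ := δ.surjective j
  simp [sgSecond, δ.injective.mem_finset_image, mem_greedySplice_snd]

theorem disjoint_greedySplice (hS : Disjoint S1 S2) (k : ℕ) :
    Disjoint (greedySplice δ σ S1 S2 k).1 (greedySplice δ σ S1 S2 k).2 := by
  rw [disjoint_left] at hS ⊢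
  intro j
  simp only [mem_greedySplice_fst, mem_greedySplice_snd]
  split_ifs <;> grind

theorem greedySplice_empty_subset (k : ℕ) :
    (greedySplice δ σ ∅ ∅ k).1 ⊆ (greedySplice δ σ S1 S2 k).1 ∧
      (greedySplice δ σ ∅ ∅ k).2 ⊆ (greedySplice δ σ S1 S2 k).2 := by
  constructor <;> intro j <;>
    simp only [mem_greedySplice_fst, mem_greedySplice_snd, notMem_empty] <;> split_ifs <;> simp

theorem greedySplice_eq_ite (i : Fin n) :
    let Y := greedySplice δ σ S1 S2 i
    Y = (if δ i ∈ S1 then insert (δ i) (Y.1.erase (δ i)) else Y.1.erase (δ i),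
      if δ i ∈ S2 then insert (δ i) (Y.2.erase (δ i)) else Y.2.erase (δ i)) := by
  ext1
  · exact eq_ite_insert_erase (by simp [mem_greedySplice_fst])
  · exact eq_ite_insert_erase (by simp [mem_greedySplice_snd])

theorem greedySplice_succ_eq_ite (i : Fin n) :
    let Y := greedySplice δ σ S1 S2 i
    greedySplice δ σ S1 S2 (i + 1) =
      (if σ (δ i) = 1 then insert (δ i) (Y.1.erase (δ i)) else Y.1.erase (δ i),
        if σ (δ i) = 1 then Y.2.erase (δ i) else insert (δ i) (Y.2.erase (δ i))) := by
  have hpos {j : Fin n} (hj : j ≠ δ i) : (δ.symm j : ℕ) < i + 1 ↔ (δ.symm j : ℕ) < i := by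
    have : δ.symm j ≠ i := fun h => hj (by rw [← h, δ.apply_symm_apply])
    have := Fin.val_ne_of_ne this
    omega
  ext1 <;> ext j <;> by_cases hj : j = δ i
  · subst hj; split_ifs <;> simp_all [mem_greedySplice_fst]
  · split_ifs <;> simp [mem_greedySplice_fst, hj, hpos hj]
  · subst hj; split_ifs <;> simp_all [mem_greedySplice_snd]
  · split_ifs <;> simp [mem_greedySplice_snd, hj, hpos hj]

end GreedySplice

section Telescoping

variable {n : ℕ} (f : Finset (Fin n) → Finset (Fin n) → ℝ) (δ : Equiv.Perm (Fin n))
  (σ : Fin n → ℝ) (S1 S2 : Finset (Fin n))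

noncomputable def greedyGap (k : ℕ) : ℝ :=
  f (greedySplice δ σ S1 S2 k).1 (greedySplice δ σ S1 S2 k).2 -
    f (greedySplice δ σ ∅ ∅ k).1 (greedySplice δ σ ∅ ∅ k).2

theorem greedyGap_zero : greedyGap f δ σ S1 S2 0 = f S1 S2 - f ∅ ∅ := by
  simp [greedyGap, greedySplice]

theorem greedyGap_of_le {k : ℕ} (hk : n ≤ k) : greedyGap f δ σ S1 S2 k = 0 := by
  have hlt (j : Fin n) : (δ.symm j : ℕ) < k := (δ.symm j).isLt.trans_le hk
  simp [greedyGap, greedySplice, hlt]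

variable {f} in
theorem Bisubmodular.signedGreedy_mul_ternary_le (hf : Bisubmodular f) (hS : Disjoint S1 S2)
    (i : Fin n) :
    signedGreedy f δ σ (δ i) * ternary S1 S2 (δ i) ≤
      greedyGap f δ σ S1 S2 i - greedyGap f δ σ S1 S2 (i + 1) := by
  rw [greedyGap, greedyGap]
  set e := δ i
  set X := greedySplice δ σ S1 S2 i
  set P := greedySplice δ σ ∅ ∅ i
  set X1 := X.1.erase e
  set X2 := X.2.erase e
  set A := P.1.erase e
  set B := P.2.erase e
  have hX : X = (if e ∈ S1 then insert e X1 else X1, if e ∈ S2 then insert e X2 else X2) :=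
    greedySplice_eq_ite δ σ S1 S2 i
  have hP : P = (A, B) := by simpa using greedySplice_eq_ite δ σ ∅ ∅ i
  have hX' : greedySplice δ σ S1 S2 (i + 1) =
      (if σ e = 1 then insert e X1 else X1, if σ e = 1 then X2 else insert e X2) :=
    greedySplice_succ_eq_ite δ σ S1 S2 i
  have hP' : greedySplice δ σ ∅ ∅ (i + 1) =
      (if σ e = 1 then insert e A else A, if σ e = 1 then B else insert e B) :=
    greedySplice_succ_eq_ite δ σ ∅ ∅ i
  have hπ : signedGreedy f δ σ e = if σ e = 1 then f (insert e P.1) P.2 - f P.1 P.2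
      else -f P.1 (insert e P.2) + f P.1 P.2 := by
    simp only [signedGreedy, e, P, Equiv.symm_apply_apply, sgFirst_eq_greedySplice,
      sgSecond_eq_greedySplice]
  have hA : A ⊆ X1 := erase_subset_erase _ (greedySplice_empty_subset δ σ S1 S2 i).1
  have hB : B ⊆ X2 := erase_subset_erase _ (greedySplice_empty_subset δ σ S1 S2 i).2
  have hXdisj : Disjoint X1 X2 :=
    (disjoint_greedySplice δ σ S1 S2 hS i).mono (erase_subset _ _) (erase_subset _ _)
  rw [hπ, hX, hP, hX', hP']
  by_cases hσ : σ e = 1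
  · simp only [hσ, if_true]
    exact hf.marginal_mul_ternary_le_insert_left hXdisj hA hB (notMem_erase _ _)
      (notMem_erase _ _) hS
  · simp only [hσ, if_false]
    exact hf.marginal_mul_ternary_le_insert_right hXdisj hA hB (notMem_erase _ _)
      (notMem_erase _ _) hS

end Telescoping

theorem extremal_poly_bimatroid_inequality_valid_general {n : ℕ}
    (f : Finset (Fin n) → Finset (Fin n) → ℝ) (hf : Bisubmodular f)
    (h0 : f ∅ ∅ = 0)
    (δ : Equiv.Perm (Fin n)) (σ : Fin n → ℝ)
    (S1 S2 : Finset (Fin n)) (hdisj : Disjoint S1 S2) :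
    ∑ j : Fin n,
        signedGreedy f δ σ j *
          (if j ∈ S1 then (1 : ℝ) else if j ∈ S2 then -1 else 0)
      ≤ f S1 S2 := by
  calc ∑ j, signedGreedy f δ σ j * ternary S1 S2 j
      = ∑ i, signedGreedy f δ σ (δ i) * ternary S1 S2 (δ i) :=
        (Equiv.sum_comp δ _).symm
    _ ≤ ∑ i : Fin n, (greedyGap f δ σ S1 S2 i - greedyGap f δ σ S1 S2 (i + 1)) :=
        sum_le_sum fun i _ => hf.signedGreedy_mul_ternary_le δ σ S1 S2 hdisj i
    _ = greedyGap f δ σ S1 S2 0 - greedyGap f δ σ S1 S2 n := by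
        rw [Fin.sum_univ_eq_sum_range (fun k => greedyGap f δ σ S1 S2 k -
          greedyGap f δ σ S1 S2 (k + 1)), sum_range_sub']
    _ = f S1 S2 := by
        rw [greedyGap_zero, greedyGap_of_le f δ σ S1 S2 le_rfl, h0, sub_zero, sub_zero]

/-- For bisubmodular `f` with `f(∅,∅) = 0`, every extremal poly-bimatroid
inequality `w ≥ π^⊤ x` is valid for the epigraph of `f`: for every biset
`(S_1, S_2)` with ternary encoding `x`, `π^⊤ x ≤ f(S_1, S_2)`. -/
theorem extremal_poly_bimatroid_inequality_valid {n : ℕ} (hn : 0 < n)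
    (f : Finset (Fin n) → Finset (Fin n) → ℝ) (hf : Bisubmodular f)
    (h0 : f ∅ ∅ = 0)
    (δ : Equiv.Perm (Fin n)) (σ : Fin n → ℝ) (hσ : ∀ j, σ j = 1 ∨ σ j = -1)
    (S1 S2 : Finset (Fin n)) (hdisj : Disjoint S1 S2) :
    ∑ j : Fin n,
        signedGreedy f δ σ j *
          (if j ∈ S1 then (1 : ℝ) else if j ∈ S2 then -1 else 0)
      ≤ f S1 S2 :=
  extremal_poly_bimatroid_inequality_valid_general f hf h0 δ σ S1 S2 hdisj
end
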